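/- arXiv:1509.04955 — 7 statements merged into one kernel-verified Lean document; each statement's English description precedes it below -/
import Mathlib

section
/- Let Ψ be the family of linear forms ψ_{v,I} on ℝ^k × ℝ^k as above. Let ψ_1,…,ψ_5 ∈ Ψ be five distinct linear forms such that the subspace {(x,y) : ψ_1(x,y) = ⋯ = ψ_5(x,y)} has codimension at most 2 in ℝ^{2k}. Then some three of ψ_1,…,ψ_5 share a common set of variables, i.e. there exist indices j_1 < j_2 < j_3 and a set I ⊆ [k] with I(ψ_{j_m}) = I ∪ {v(ψ_{j_m})} for m = 1,2,3. -/
/-- ψ_{v,I}(x,y) = Σ_{i∈I}(v−i)x_i + Σ_{i∉I}(v−i)y_i. -/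
def psiVI (k : ℕ) (v : Fin k) (I : Finset (Fin k)) (x y : Fin k → ℝ) : ℝ :=
  ∑ i : Fin k, (if i ∈ I then ((v : ℝ) - (i : ℝ)) * x i else ((v : ℝ) - (i : ℝ)) * y i)

noncomputable def phiL (k : ℕ) (v : Fin k) (I : Finset (Fin k)) :
    ((Fin k → ℝ) × (Fin k → ℝ)) →ₗ[ℝ] ℝ where
  toFun p := psiVI k v I p.1 p.2
  map_add' p q := by
    simp only [psiVI, Prod.fst_add, Prod.snd_add, Pi.add_apply, ← Finset.sum_add_distrib]
    refine Finset.sum_congr rfl fun i _ => ?_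
    split <;> ring
  map_smul' c p := by
    simp only [psiVI, Prod.smul_fst, Prod.smul_snd, Pi.smul_apply, smul_eq_mul,
      RingHom.id_apply, Finset.mul_sum]
    refine Finset.sum_congr rfl fun i _ => ?_
    split <;> ring

lemma phiL_evalX (k : ℕ) (v : Fin k) (I : Finset (Fin k)) (j : Fin k) :
    phiL k v I (Pi.single j 1, 0) = if j ∈ I then ((v : ℝ) - (j : ℝ)) else 0 := by
  show psiVI k v I (Pi.single j 1) 0 = _
  rw [psiVI, Finset.sum_eq_single j]
  · split <;> simp
  · intro i _ hij
    split <;> simp [Pi.single_eq_of_ne hij]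
  · simp

lemma phiL_evalY (k : ℕ) (v : Fin k) (I : Finset (Fin k)) (j : Fin k) :
    phiL k v I (0, Pi.single j 1) = if j ∈ I then 0 else ((v : ℝ) - (j : ℝ)) := by
  show psiVI k v I 0 (Pi.single j 1) = _
  rw [psiVI, Finset.sum_eq_single j]
  · split <;> simp
  · intro i _ hij
    split <;> simp [Pi.single_eq_of_ne hij]
  · simp

lemma phiL_evalS (k : ℕ) (v : Fin k) (I : Finset (Fin k)) (j : Fin k) :
    phiL k v I (Pi.single j 1, Pi.single j 1) = (v : ℝ) - (j : ℝ) := by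
  show psiVI k v I (Pi.single j 1) (Pi.single j 1) = _
  rw [psiVI, Finset.sum_eq_single j]
  · split <;> simp
  · intro i _ hij
    split <;> simp [Pi.single_eq_of_ne hij]
  · simp

lemma fin_cast_ne {k : ℕ} {i j : Fin k} (h : i ≠ j) : (i : ℝ) ≠ (j : ℝ) := by
  intro hc
  exact h (Fin.ext (by exact_mod_cast hc))
lemma build_triple {k : ℕ} (v : Fin 5 → Fin k) (I : Fin 5 → Finset (Fin k))
    (hv : ∀ m, v m ∈ I m) (a b c : Fin 5)
    (hab : ∀ i, i ≠ v a → i ≠ v b → (i ∈ I a ↔ i ∈ I b))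
    (hac : ∀ i, i ≠ v a → i ≠ v c → (i ∈ I a ↔ i ∈ I c))
    (hbc : ∀ i, i ≠ v b → i ≠ v c → (i ∈ I b ↔ i ∈ I c)) :
    ∃ J : Finset (Fin k),
      I a = insert (v a) J ∧ I b = insert (v b) J ∧ I c = insert (v c) J := by
  classical
  refine ⟨(I a).erase (v a) ∪ (I b).erase (v b) ∪ (I c).erase (v c), ?_, ?_, ?_⟩
  · ext i
    simp only [Finset.mem_insert, Finset.mem_union, Finset.mem_erase]
    constructor
    · intro hi
      by_cases h : i = v a
      · exact Or.inl h
      · exact Or.inr (Or.inl (Or.inl ⟨h, hi⟩))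
    · rintro (rfl | ((⟨h1, h2⟩ | ⟨h1, h2⟩) | ⟨h1, h2⟩))
      · exact hv a
      · exact h2
      · by_cases h : i = v a
        · exact h ▸ hv a
        · exact (hab i h h1).mpr h2
      · by_cases h : i = v a
        · exact h ▸ hv a
        · exact (hac i h h1).mpr h2
  · ext i
    simp only [Finset.mem_insert, Finset.mem_union, Finset.mem_erase]
    constructor
    · intro hi
      by_cases h : i = v b
      · exact Or.inl h
      · exact Or.inr (Or.inl (Or.inr ⟨h, hi⟩))
    · rintro (rfl | ((⟨h1, h2⟩ | ⟨h1, h2⟩) | ⟨h1, h2⟩))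
      · exact hv b
      · by_cases h : i = v b
        · exact h ▸ hv b
        · exact (hab i h1 h).mp h2
      · exact h2
      · by_cases h : i = v b
        · exact h ▸ hv b
        · exact (hbc i h h1).mpr h2
  · ext i
    simp only [Finset.mem_insert, Finset.mem_union, Finset.mem_erase]
    constructor
    · intro hi
      by_cases h : i = v c
      · exact Or.inl h
      · exact Or.inr (Or.inr ⟨h, hi⟩)
    · rintro (rfl | ((⟨h1, h2⟩ | ⟨h1, h2⟩) | ⟨h1, h2⟩))
      · exact hv c
      · by_cases h : i = v c
        · exact h ▸ hv c
        · exact (hac i h1 h).mp h2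
      · by_cases h : i = v c
        · exact h ▸ hv c
        · exact (hbc i h1 h).mp h2
      · exact h2
lemma claimA {k : ℕ} (v : Fin 5 → Fin k) (I : Fin 5 → Finset (Fin k))
    (a b c : Fin 5) (u : ℝ) (hu0 : u ≠ 0) (hu1 : u ≠ 1)
    (hE : ∀ p : (Fin k → ℝ) × (Fin k → ℝ),
      phiL k (v c) (I c) p = (1 - u) * phiL k (v a) (I a) p + u * phiL k (v b) (I b) p) :
    (∀ i, i ≠ v a → i ≠ v b → (i ∈ I a ↔ i ∈ I b)) ∧
    (∀ i, i ≠ v a → i ≠ v c → (i ∈ I a ↔ i ∈ I c)) ∧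
    (∀ i, i ≠ v b → i ≠ v c → (i ∈ I b ↔ i ∈ I c)) := by
  classical
  have hs0 : (1 : ℝ) - u ≠ 0 := sub_ne_zero.mpr (Ne.symm hu1)
  have hX : ∀ i : Fin k,
      (if i ∈ I c then ((v c : ℝ) - (i : ℝ)) else 0) =
        (1 - u) * (if i ∈ I a then ((v a : ℝ) - (i : ℝ)) else 0) +
        u * (if i ∈ I b then ((v b : ℝ) - (i : ℝ)) else 0) := by
    intro i
    have := hE (Pi.single i 1, 0)
    rwa [phiL_evalX, phiL_evalX, phiL_evalX] at this
  have hY : ∀ i : Fin k,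
      (if i ∈ I c then 0 else ((v c : ℝ) - (i : ℝ))) =
        (1 - u) * (if i ∈ I a then 0 else ((v a : ℝ) - (i : ℝ))) +
        u * (if i ∈ I b then 0 else ((v b : ℝ) - (i : ℝ))) := by
    intro i
    have := hE (0, Pi.single i 1)
    rwa [phiL_evalY, phiL_evalY, phiL_evalY] at this
  have hS : ∀ i : Fin k,
      ((v c : ℝ) - (i : ℝ)) =
        (1 - u) * ((v a : ℝ) - (i : ℝ)) + u * ((v b : ℝ) - (i : ℝ)) := by
    intro i
    have := hE (Pi.single i 1, Pi.single i 1)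
    rwa [phiL_evalS, phiL_evalS, phiL_evalS] at this
  refine ⟨?_, ?_, ?_⟩
  · intro i hia hib
    have hia' : (v a : ℝ) - (i : ℝ) ≠ 0 := sub_ne_zero.mpr (fin_cast_ne (Ne.symm hia))
    have hib' : (v b : ℝ) - (i : ℝ) ≠ 0 := sub_ne_zero.mpr (fin_cast_ne (Ne.symm hib))
    have h1 := hX i; have h2 := hY i; have h3 := hS i
    by_cases hα : i ∈ I a <;> by_cases hβ : i ∈ I b
    all_goals first
      | exact iff_of_true hα hβ
      | exact iff_of_false hα hβ
      | · exfalso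
          by_cases hγ : i ∈ I c <;>
            simp only [hα, hβ, hγ, if_true, if_false, if_pos, if_neg, not_false_iff,
              mul_zero, zero_add, add_zero] at h1 h2 <;>
          first
            | exact (mul_ne_zero hs0 hia') (by linarith)
            | exact (mul_ne_zero hu0 hib') (by linarith)
  · intro i hia hic
    have hia' : (v a : ℝ) - (i : ℝ) ≠ 0 := sub_ne_zero.mpr (fin_cast_ne (Ne.symm hia))
    have hic' : (v c : ℝ) - (i : ℝ) ≠ 0 := sub_ne_zero.mpr (fin_cast_ne (Ne.symm hic))
    have h1 := hX i; have h2 := hY i; have h3 := hS i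
    by_cases hα : i ∈ I a <;> by_cases hγ : i ∈ I c
    all_goals first
      | exact iff_of_true hα hγ
      | exact iff_of_false hα hγ
      | · exfalso
          by_cases hβ : i ∈ I b <;>
            simp only [hα, hβ, hγ, if_true, if_false, if_pos, if_neg, not_false_iff,
              mul_zero, zero_add, add_zero] at h1 h2 <;>
          first
            | exact (mul_ne_zero hs0 hia') (by linarith)
            | exact hic' (by linarith)
  · intro i hib hic
    have hib' : (v b : ℝ) - (i : ℝ) ≠ 0 := sub_ne_zero.mpr (fin_cast_ne (Ne.symm hib))
    have hic' : (v c : ℝ) - (i : ℝ) ≠ 0 := sub_ne_zero.mpr (fin_cast_ne (Ne.symm hic))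
    have h1 := hX i; have h2 := hY i; have h3 := hS i
    by_cases hβ : i ∈ I b <;> by_cases hγ : i ∈ I c
    all_goals first
      | exact iff_of_true hβ hγ
      | exact iff_of_false hβ hγ
      | · exfalso
          by_cases hα : i ∈ I a <;>
            simp only [hα, hβ, hγ, if_true, if_false, if_pos, if_neg, not_false_iff,
              mul_zero, zero_add, add_zero] at h1 h2 <;>
          first
            | exact (mul_ne_zero hu0 hib') (by linarith)
            | exact hic' (by linarith)
lemma dep3 {D : Type*} [AddCommGroup D] [Module ℝ D]
    (A : Submodule ℝ D) [FiniteDimensional ℝ A]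
    (hA : Module.finrank ℝ A ≤ 2) (f g h : D) (hf : f ∈ A) (hg : g ∈ A) (hh : h ∈ A) :
    ∃ c₀ c₁ c₂ : ℝ, (c₀ ≠ 0 ∨ c₁ ≠ 0 ∨ c₂ ≠ 0) ∧ c₀ • f + c₁ • g + c₂ • h = 0 := by
  have hnli : ¬ LinearIndependent ℝ (![⟨f, hf⟩, ⟨g, hg⟩, ⟨h, hh⟩] : Fin 3 → A) := by
    intro hli
    have := hli.fintype_card_le_finrank
    rw [Fintype.card_fin] at this
    omega
  obtain ⟨g', hsum, j, hj⟩ := Fintype.not_linearIndependent_iff.mp hnli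
  refine ⟨g' 0, g' 1, g' 2, ?_, ?_⟩
  · fin_cases j
    · exact Or.inl hj
    · exact Or.inr (Or.inl hj)
    · exact Or.inr (Or.inr hj)
  · have := congrArg (Subtype.val) hsum
    simpa [Fin.sum_univ_three] using this

set_option maxHeartbeats 2000000 in
/-- Non-generic case of five linear forms: if five distinct forms of Ψ all agree on a
subspace of codimension at most 2 in ℝ^{2k}, then three of them share a common set of
variables. -/
theorem stmt3 (k : ℕ) (hk : 2 ≤ k) (v : Fin 5 → Fin k) (I : Fin 5 → Finset (Fin k))
    (hv : ∀ m, v m ∈ I m) (hdist : Function.Injective fun m => (v m, I m))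
    (W : Submodule ℝ ((Fin k → ℝ) × (Fin k → ℝ)))
    (hW : ∀ p : (Fin k → ℝ) × (Fin k → ℝ), p ∈ W ↔
      ∀ m m' : Fin 5, psiVI k (v m) (I m) p.1 p.2 = psiVI k (v m') (I m') p.1 p.2)
    (hcodim : 2 * k - 2 ≤ Module.finrank ℝ W) :
    ∃ m₁ m₂ m₃ : Fin 5, m₁ < m₂ ∧ m₂ < m₃ ∧ ∃ J : Finset (Fin k),
      I m₁ = insert (v m₁) J ∧ I m₂ = insert (v m₂) J ∧ I m₃ = insert (v m₃) J := by
  classical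
  set φ : Fin 5 → (((Fin k → ℝ) × (Fin k → ℝ)) →ₗ[ℝ] ℝ) :=
    fun m => phiL k (v m) (I m) with hφdef
  -- injectivity of m ↦ φ m (pointwise version)
  have hphi_inj : ∀ a b : Fin 5, (∀ p, φ a p = φ b p) → a = b := by
    intro a b hab
    have i0 : Fin k := ⟨0, by omega⟩
    have hS := hab (Pi.single i0 1, Pi.single i0 1)
    simp only [hφdef] at hS
    rw [phiL_evalS, phiL_evalS] at hS
    have hvab : v a = v b := by
      have h : ((v a : ℝ)) = (v b : ℝ) := by linarith
      exact Fin.ext (by exact_mod_cast h)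
    have hI : I a = I b := by
      ext i
      by_cases hiva : i = v a
      · subst hiva
        exact iff_of_true (hv a) (hvab ▸ hv b)
      · have hX := hab (Pi.single i 1, 0)
        simp only [hφdef] at hX
        rw [phiL_evalX, phiL_evalX] at hX
        have hne : (v a : ℝ) - (i : ℝ) ≠ 0 := sub_ne_zero.mpr (fin_cast_ne (fun h => hiva h.symm))
        have hne' : (v b : ℝ) - (i : ℝ) ≠ 0 := hvab ▸ hne
        by_cases h1 : i ∈ I a <;> by_cases h2 : i ∈ I b
        · exact iff_of_true h1 h2
        · exfalso; rw [if_pos h1, if_neg h2] at hX; exact hne hX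
        · exfalso; rw [if_neg h1, if_pos h2] at hX; exact hne' hX.symm
        · exact iff_of_false h1 h2
    apply hdist
    show (v a, I a) = (v b, I b)
    rw [hvab, hI]
  -- helper to finish from a pairwise-compatible triple
  have go : ∀ x y z : Fin 5, x < y → y < z →
      (∀ i, i ≠ v x → i ≠ v y → (i ∈ I x ↔ i ∈ I y)) →
      (∀ i, i ≠ v x → i ≠ v z → (i ∈ I x ↔ i ∈ I z)) →
      (∀ i, i ≠ v y → i ≠ v z → (i ∈ I y ↔ i ∈ I z)) →
      ∃ m₁ m₂ m₃ : Fin 5, m₁ < m₂ ∧ m₂ < m₃ ∧ ∃ J : Finset (Fin k),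
        I m₁ = insert (v m₁) J ∧ I m₂ = insert (v m₂) J ∧ I m₃ = insert (v m₃) J :=
    fun x y z hxy hyz c1 c2 c3 =>
      ⟨x, y, z, hxy, hyz, build_triple v I hv x y z c1 c2 c3⟩
  by_cases hcol : ∃ a b c : Fin 5, a ≠ b ∧ a ≠ c ∧ b ≠ c ∧ ∃ u : ℝ, u ≠ 0 ∧ u ≠ 1 ∧
      ∀ p, φ c p = (1 - u) * φ a p + u * φ b p
  · obtain ⟨a, b, c, hab, hac, hbc, u, hu0, hu1, hpat⟩ := hcol
    obtain ⟨Cab, Cac, Cbc⟩ := claimA v I a b c u hu0 hu1 hpat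
    have Cba : ∀ i, i ≠ v b → i ≠ v a → (i ∈ I b ↔ i ∈ I a) :=
      fun i h1 h2 => (Cab i h2 h1).symm
    have Cca : ∀ i, i ≠ v c → i ≠ v a → (i ∈ I c ↔ i ∈ I a) :=
      fun i h1 h2 => (Cac i h2 h1).symm
    have Ccb : ∀ i, i ≠ v c → i ≠ v b → (i ∈ I c ↔ i ∈ I b) :=
      fun i h1 h2 => (Cbc i h2 h1).symm
    rcases Ne.lt_or_gt hab with h1 | h1 <;> rcases Ne.lt_or_gt hac with h2 | h2 <;>
      rcases Ne.lt_or_gt hbc with h3 | h3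
    · exact go a b c h1 h3 Cab Cac Cbc
    · exact go a c b h2 h3 Cac Cab Ccb
    · exact absurd h3 (h2.trans h1).asymm
    · exact go c a b h2 h1 Cca Ccb Cab
    · exact go b a c h1 h2 Cba Cbc Cac
    · exact absurd h1 (h2.trans h3).asymm
    · exact go b c a h3 h2 Cbc Cba Cca
    · exact go c b a h3 h1 Ccb Cca Cba
  · -- no collinear triple: derive that all pairs are compatible
    have hvan : ∀ a b : Fin 5, φ a - φ b ∈ W.dualAnnihilator := by
      intro a b
      rw [Submodule.mem_dualAnnihilator]
      intro w hw
      have h := (hW w).mp hw a b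
      simp only [LinearMap.sub_apply, hφdef]
      show psiVI k (v a) (I a) w.1 w.2 - psiVI k (v b) (I b) w.1 w.2 = 0
      rw [h]; ring
    have hAfr : Module.finrank ℝ (W.dualAnnihilator) ≤ 2 := by
      have e1 : Module.finrank ℝ ((((Fin k → ℝ) × (Fin k → ℝ))) ⧸ W)
          = Module.finrank ℝ W.dualAnnihilator :=
        (Subspace.quotEquivAnnihilator W).finrank_eq
      have e2 := Submodule.finrank_quotient_add_finrank W
      have e3 : Module.finrank ℝ ((Fin k → ℝ) × (Fin k → ℝ)) = k + k := by
        rw [Module.finrank_prod, Module.finrank_fintype_fun_eq_card, Fintype.card_fin]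
      rw [e1, e3] at e2
      omega
    -- coordinates
    have hcoord : ∀ m : Fin 5, ∃ ab : ℝ × ℝ, ∀ p, φ m p =
        φ 0 p + ab.1 * (φ 1 p - φ 0 p) + ab.2 * (φ 2 p - φ 0 p) := by
      intro m
      obtain ⟨c₀, c₁, c₂, hne, hrel⟩ := dep3 W.dualAnnihilator hAfr
        (φ 1 - φ 0) (φ 2 - φ 0) (φ m - φ 0) (hvan 1 0) (hvan 2 0) (hvan m 0)
      have hrelp : ∀ p, c₀ * (φ 1 p - φ 0 p) + c₁ * (φ 2 p - φ 0 p)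
          + c₂ * (φ m p - φ 0 p) = 0 := by
        intro p
        have h := congrArg (fun (F : ((Fin k → ℝ) × (Fin k → ℝ)) →ₗ[ℝ] ℝ) => F p) hrel
        simpa [LinearMap.add_apply, LinearMap.smul_apply, LinearMap.sub_apply,
          smul_eq_mul] using h
      by_cases hc2 : c₂ = 0
      · exfalso
        by_cases hc1 : c₁ = 0
        · have hc0 : c₀ ≠ 0 := by
            rcases hne with h | h | h
            · exact h
            · exact absurd hc1 h
            · exact absurd hc2 h
          refine (show (1 : Fin 5) ≠ 0 by decide) (hphi_inj 1 0 fun p => ?_)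
          have h := hrelp p
          rw [hc1, hc2] at h
          have h2 : φ 1 p - φ 0 p = 0 := by
            rcases mul_eq_zero.mp (by linarith : c₀ * (φ 1 p - φ 0 p) = 0) with h' | h'
            · exact absurd h' hc0
            · exact h'
          linarith
        · set u : ℝ := -c₀ / c₁ with hu
          have htu : u * c₁ = -c₀ := div_mul_cancel₀ _ hc1
          have hpat : ∀ p, φ 2 p = (1 - u) * φ 0 p + u * φ 1 p := by
            intro p
            have h := hrelp p
            rw [hc2] at h
            have hmz : c₁ * (φ 2 p - ((1 - u) * φ 0 p + u * φ 1 p)) = 0 := by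
              linear_combination h - (φ 1 p - φ 0 p) * htu
            have := (mul_eq_zero.mp hmz).resolve_left hc1
            linarith
          have hu0 : u ≠ 0 := by
            intro h0
            refine (show (2 : Fin 5) ≠ 0 by decide) (hphi_inj 2 0 fun p => ?_)
            have h := hpat p
            rw [h0] at h
            linarith
          have hu1 : u ≠ 1 := by
            intro h1
            refine (show (2 : Fin 5) ≠ 1 by decide) (hphi_inj 2 1 fun p => ?_)
            have h := hpat p
            rw [h1] at h
            linarith
          exact hcol ⟨0, 1, 2, by decide, by decide, by decide, u, hu0, hu1, hpat⟩
      · refine ⟨(-c₀ / c₂, -c₁ / c₂), fun p => ?_⟩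
        have h1 : (-c₀ / c₂) * c₂ = -c₀ := div_mul_cancel₀ _ hc2
        have h2 : (-c₁ / c₂) * c₂ = -c₁ := div_mul_cancel₀ _ hc2
        have h := hrelp p
        have hmz : c₂ * (φ m p - (φ 0 p + (-c₀ / c₂) * (φ 1 p - φ 0 p)
            + (-c₁ / c₂) * (φ 2 p - φ 0 p))) = 0 := by
          linear_combination h - (φ 1 p - φ 0 p) * h1 - (φ 2 p - φ 0 p) * h2
        have := (mul_eq_zero.mp hmz).resolve_left hc2
        linarith
    choose q hq using hcoord
    -- no three of the points q are collinear
    have hdet : ∀ a b c : Fin 5, a ≠ b → a ≠ c → b ≠ c →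
        ((q b).1 - (q a).1) * ((q c).2 - (q a).2)
          - ((q b).2 - (q a).2) * ((q c).1 - (q a).1) ≠ 0 := by
      intro a b c hab hac hbc hdet0
      have hpne : ¬((q b).1 - (q a).1 = 0 ∧ (q b).2 - (q a).2 = 0) := by
        rintro ⟨h1, h2⟩
        refine hab (hphi_inj a b fun p => ?_)
        rw [hq a p, hq b p]
        have e1 : (q b).1 = (q a).1 := by linarith
        have e2 : (q b).2 = (q a).2 := by linarith
        rw [e1, e2]
      -- find t with q c - q a = t • (q b - q a)
      have hT : ∃ t : ℝ, (q c).1 - (q a).1 = t * ((q b).1 - (q a).1) ∧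
          (q c).2 - (q a).2 = t * ((q b).2 - (q a).2) := by
        by_cases hp1 : (q b).1 - (q a).1 = 0
        · have hp2 : (q b).2 - (q a).2 ≠ 0 := fun h => hpne ⟨hp1, h⟩
          refine ⟨((q c).2 - (q a).2) / ((q b).2 - (q a).2), ?_, ?_⟩
          · have hmz : ((q b).2 - (q a).2) * ((q c).1 - (q a).1) = 0 := by
              linear_combination ((q c).2 - (q a).2) * hp1 - hdet0
            have := (mul_eq_zero.mp hmz).resolve_left hp2
            rw [hp1, mul_zero]
            exact this
          · rw [div_mul_cancel₀ _ hp2]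
        · refine ⟨((q c).1 - (q a).1) / ((q b).1 - (q a).1), ?_, ?_⟩
          · rw [div_mul_cancel₀ _ hp1]
          · have ht1 : (((q c).1 - (q a).1) / ((q b).1 - (q a).1)) * ((q b).1 - (q a).1)
                = (q c).1 - (q a).1 := div_mul_cancel₀ _ hp1
            have hmz : ((q b).1 - (q a).1) * (((q c).2 - (q a).2)
                - (((q c).1 - (q a).1) / ((q b).1 - (q a).1)) * ((q b).2 - (q a).2)) = 0 := by
              linear_combination hdet0 - ((q b).2 - (q a).2) * ht1
            have := (mul_eq_zero.mp hmz).resolve_left hp1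
            linarith
      obtain ⟨t, ht1, ht2⟩ := hT
      have hpat : ∀ p, φ c p = (1 - t) * φ a p + t * φ b p := by
        intro p
        have ha := hq a p; have hb := hq b p; have hc := hq c p
        linear_combination hc - (1 - t) * ha - t * hb
          + (φ 1 p - φ 0 p) * ht1 + (φ 2 p - φ 0 p) * ht2
      have ht0 : t ≠ 0 := by
        intro h0
        refine hac (hphi_inj a c fun p => ?_)
        have h := hpat p
        rw [h0] at h
        linarith
      have htne1 : t ≠ 1 := by
        intro h1
        refine hbc (hphi_inj b c fun p => ?_)
        have h := hpat p
        rw [h1] at h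
        linarith
      exact hcol ⟨a, b, c, hab, hac, hbc, t, ht0, htne1, hpat⟩
    -- an affine function vanishing at three of the five points vanishes everywhere
    have hzero : ∀ (F : Fin 5 → ℝ) (u₀ u₁ u₂ : ℝ),
        (∀ m, F m = u₀ + (q m).1 * u₁ + (q m).2 * u₂) →
        ∀ a b c : Fin 5, a ≠ b → a ≠ c → b ≠ c →
          F a = 0 → F b = 0 → F c = 0 → ∀ m, F m = 0 := by
      intro F u₀ u₁ u₂ hF a b c hab hac hbc ha0 hb0 hc0 m
      have D := hdet a b c hab hac hbc
      have e1 : ((q b).1 - (q a).1) * u₁ + ((q b).2 - (q a).2) * u₂ = 0 := by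
        linear_combination hb0 - ha0 - hF b + hF a
      have e2 : ((q c).1 - (q a).1) * u₁ + ((q c).2 - (q a).2) * u₂ = 0 := by
        linear_combination hc0 - ha0 - hF c + hF a
      have hu1 : u₁ = 0 := by
        have hmz : u₁ * (((q b).1 - (q a).1) * ((q c).2 - (q a).2)
            - ((q b).2 - (q a).2) * ((q c).1 - (q a).1)) = 0 := by
          linear_combination ((q c).2 - (q a).2) * e1 - ((q b).2 - (q a).2) * e2
        exact (mul_eq_zero.mp hmz).resolve_right D
      have hu2 : u₂ = 0 := by
        have hmz : u₂ * (((q b).1 - (q a).1) * ((q c).2 - (q a).2)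
            - ((q b).2 - (q a).2) * ((q c).1 - (q a).1)) = 0 := by
          linear_combination -((q c).1 - (q a).1) * e1 + ((q b).1 - (q a).1) * e2
        exact (mul_eq_zero.mp hmz).resolve_right D
      have hu0 : u₀ = 0 := by
        linear_combination ha0 - hF a - (q a).1 * hu1 - (q a).2 * hu2
      rw [hF m, hu0, hu1, hu2]
      ring
    -- key dichotomy for every index i
    have key : ∀ i : Fin k, (∀ m, i ∈ I m → v m = i) ∨ (∀ m, i ∈ I m) := by
      intro i
      obtain ⟨X, hXphi⟩ : ∃ X : Fin 5 → ℝ,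
          ∀ m, φ m (Pi.single i 1, (0 : Fin k → ℝ)) = X m := ⟨_, fun m => rfl⟩
      obtain ⟨Y, hYphi⟩ : ∃ Y : Fin 5 → ℝ,
          ∀ m, φ m (Pi.single i 1, Pi.single i 1) = Y m := ⟨_, fun m => rfl⟩
      have hXval : ∀ m, X m = (if i ∈ I m then ((v m : ℝ) - (i : ℝ)) else 0) := by
        intro m
        rw [← hXphi m]
        simp only [hφdef]
        exact phiL_evalX k (v m) (I m) i
      have hYval : ∀ m, Y m = ((v m : ℝ) - (i : ℝ)) := by
        intro m
        rw [← hYphi m]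
        simp only [hφdef]
        exact phiL_evalS k (v m) (I m) i
      have hXaff : ∀ m, X m = X 0 + (q m).1 * (X 1 - X 0) + (q m).2 * (X 2 - X 0) := by
        intro m
        rw [← hXphi m, ← hXphi 0, ← hXphi 1, ← hXphi 2]
        exact hq m (Pi.single i 1, (0 : Fin k → ℝ))
      have hYaff : ∀ m, Y m = Y 0 + (q m).1 * (Y 1 - Y 0) + (q m).2 * (Y 2 - Y 0) := by
        intro m
        rw [← hYphi m, ← hYphi 0, ← hYphi 1, ← hYphi 2]
        exact hq m (Pi.single i 1, Pi.single i 1)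
      have hFaff : ∀ m, X m - Y m = (X 0 - Y 0) + (q m).1 * ((X 1 - Y 1) - (X 0 - Y 0))
          + (q m).2 * ((X 2 - Y 2) - (X 0 - Y 0)) := by
        intro m
        linear_combination hXaff m - hYaff m
      have hdich : ∀ m, X m = 0 ∨ X m = Y m := by
        intro m
        rw [hXval m, hYval m]
        by_cases him : i ∈ I m
        · right; rw [if_pos him]
        · left; rw [if_neg him]
      by_contra hcon
      push_neg at hcon
      obtain ⟨⟨a, ha1, ha2⟩, b, hb⟩ := hcon
      have hvai : (v a : ℝ) - (i : ℝ) ≠ 0 := sub_ne_zero.mpr (fin_cast_ne ha2)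
      have hXa : X a ≠ 0 := by rw [hXval a, if_pos ha1]; exact hvai
      have hXaY : X a = Y a := by rw [hXval a, hYval a, if_pos ha1]
      have hXb : X b = 0 := by rw [hXval b, if_neg hb]
      have hvbi : v b ≠ i := fun h => hb (h ▸ hv b)
      have hXbY : X b ≠ Y b := by
        rw [hXb, hYval b]
        exact fun h => (sub_ne_zero.mpr (fin_cast_ne hvbi)) h.symm
      have hab : a ≠ b := fun h => hb (h ▸ ha1)
      set S : Finset (Fin 5) := Finset.univ \ {a, b} with hSdef
      have hScard : 2 < S.card := by
        rw [hSdef, Finset.card_sdiff_of_subset (Finset.subset_univ _)]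
        rw [Finset.card_insert_of_notMem (by simpa using hab), Finset.card_singleton]
        simp
      have hmaps : ∀ m ∈ S, (if X m = 0 then (0 : ℕ) else 1) ∈ ({0, 1} : Finset ℕ) := by
        intro m _
        by_cases h : X m = 0 <;> simp [h]
      obtain ⟨c₁, hc₁, c₂, hc₂, hne12, hside⟩ :=
        Finset.exists_ne_map_eq_of_card_lt_of_maps_to (by simpa using hScard) hmaps
      have hc₁a : c₁ ≠ a := by
        rw [hSdef] at hc₁; simp only [Finset.mem_sdiff, Finset.mem_insert,
          Finset.mem_singleton, Finset.mem_univ, true_and] at hc₁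
        exact fun h => hc₁ (Or.inl h)
      have hc₁b : c₁ ≠ b := by
        rw [hSdef] at hc₁; simp only [Finset.mem_sdiff, Finset.mem_insert,
          Finset.mem_singleton, Finset.mem_univ, true_and] at hc₁
        exact fun h => hc₁ (Or.inr h)
      have hc₂a : c₂ ≠ a := by
        rw [hSdef] at hc₂; simp only [Finset.mem_sdiff, Finset.mem_insert,
          Finset.mem_singleton, Finset.mem_univ, true_and] at hc₂
        exact fun h => hc₂ (Or.inl h)
      have hc₂b : c₂ ≠ b := by
        rw [hSdef] at hc₂; simp only [Finset.mem_sdiff, Finset.mem_insert,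
          Finset.mem_singleton, Finset.mem_univ, true_and] at hc₂
        exact fun h => hc₂ (Or.inr h)
      by_cases hz : X c₁ = 0
      · have hz2 : X c₂ = 0 := by
          by_cases h : X c₂ = 0
          · exact h
          · rw [if_pos hz, if_neg h] at hside; exact absurd hside (by norm_num)
        have hall := hzero X (X 0) (X 1 - X 0) (X 2 - X 0) hXaff b c₁ c₂
          (fun h => hc₁b h.symm) (fun h => hc₂b h.symm) hne12 hXb hz hz2
        exact hXa (hall a)
      · have hz2 : ¬ X c₂ = 0 := by
          intro h
          rw [if_neg hz, if_pos h] at hside; exact absurd hside (by norm_num)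
        have hy1 : X c₁ - Y c₁ = 0 := sub_eq_zero.mpr ((hdich c₁).resolve_left hz)
        have hy2 : X c₂ - Y c₂ = 0 := sub_eq_zero.mpr ((hdich c₂).resolve_left hz2)
        have hya : X a - Y a = 0 := sub_eq_zero.mpr hXaY
        have hall := hzero (fun m => X m - Y m) (X 0 - Y 0) ((X 1 - Y 1) - (X 0 - Y 0))
          ((X 2 - Y 2) - (X 0 - Y 0)) hFaff a c₁ c₂
          (fun h => hc₁a h.symm) (fun h => hc₂a h.symm) hne12 hya hy1 hy2
        exact hXbY (sub_eq_zero.mp (hall b))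
    have hcompat : ∀ a b : Fin 5, ∀ i, i ≠ v a → i ≠ v b → (i ∈ I a ↔ i ∈ I b) := by
      intro a b i hia hib
      rcases key i with h | h
      · constructor
        · intro hm; exact absurd (h a hm) (fun h' => hia h'.symm)
        · intro hm; exact absurd (h b hm) (fun h' => hib h'.symm)
      · exact iff_of_true (h a) (h b)
    exact go 0 1 2 (by decide) (by decide) (hcompat 0 1) (hcompat 0 2) (hcompat 1 2)
end

section
/- Let I ⊆ [k] and Π_I = {(x,y) ∈ ℝ^k × ℝ^k : Σ_{i∈I} x_i + Σ_{i∉I} y_i = 0}. Let ψ_1,…,ψ_s be forms in Ψ whose restrictions to Π_I are pairwise distinct, and suppose the set where all these restrictions agree has codimension at most 1 inside Π_I. Then s ≤ k. -/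
open Module

namespace Stmt4Aux

def psiL (k : ℕ) (v : Fin k) (J : Finset (Fin k)) :
    ((Fin k → ℝ) × (Fin k → ℝ)) →ₗ[ℝ] ℝ where
  toFun p := psiVI k v J p.1 p.2
  map_add' p q := by
    simp only [psiVI, Prod.fst_add, Prod.snd_add, Pi.add_apply]
    rw [← Finset.sum_add_distrib]
    exact Finset.sum_congr rfl fun i _ => by split_ifs <;> ring
  map_smul' c p := by
    simp only [psiVI, Prod.smul_fst, Prod.smul_snd, Pi.smul_apply, smul_eq_mul,
      RingHom.id_apply]
    rw [Finset.mul_sum]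
    exact Finset.sum_congr rfl fun i _ => by split_ifs <;> ring

@[simp] lemma psiL_apply {k : ℕ} (v : Fin k) (J : Finset (Fin k)) (p) :
    psiL k v J p = psiVI k v J p.1 p.2 := rfl

def lfun (k : ℕ) (I : Finset (Fin k)) : ((Fin k → ℝ) × (Fin k → ℝ)) →ₗ[ℝ] ℝ where
  toFun p := (∑ i ∈ I, p.1 i) + (∑ i ∈ Iᶜ, p.2 i)
  map_add' p q := by
    simp [Finset.sum_add_distrib]; ring
  map_smul' c p := by
    simp only [Prod.smul_fst, Prod.smul_snd, Pi.smul_apply, smul_eq_mul, RingHom.id_apply,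
      Finset.mul_sum]
    rw [mul_add, Finset.mul_sum, Finset.mul_sum]

@[simp] lemma lfun_apply {k : ℕ} (I : Finset (Fin k)) (p) :
    lfun k I p = (∑ i ∈ I, p.1 i) + (∑ i ∈ Iᶜ, p.2 i) := rfl

lemma psiL_xx {k : ℕ} (v : Fin k) (J : Finset (Fin k)) (m : Fin k) :
    psiL k v J (Pi.single m 1, Pi.single m 1) = (v : ℝ) - m := by
  simp [psiVI, Pi.single_apply, ite_self, mul_ite, Finset.sum_ite_eq]

lemma psiL_y {k : ℕ} (v : Fin k) (J : Finset (Fin k)) (m : Fin k) :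
    psiL k v J ((0 : Fin k → ℝ), Pi.single m 1) =
      if m ∈ J then 0 else (v : ℝ) - m := by
  simp only [psiL_apply, psiVI, Pi.zero_apply, mul_zero, Pi.single_apply, mul_ite, mul_one]
  rw [Fintype.sum_eq_single m (f := fun i =>
      if i ∈ J then (0:ℝ) else if i = m then (v:ℝ) - i else 0)
    (fun i hi => by simp [hi, ite_self])]
  by_cases h : m ∈ J <;> simp [h]

lemma lfun_xx {k : ℕ} (I : Finset (Fin k)) (m : Fin k) :
    lfun k I (Pi.single m 1, Pi.single m 1) = 1 := by
  rw [lfun_apply, Finset.sum_add_sum_compl]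
  simp [Pi.single_apply, Finset.sum_ite_eq']

lemma lfun_y {k : ℕ} (I : Finset (Fin k)) (m : Fin k) :
    lfun k I ((0 : Fin k → ℝ), Pi.single m 1) = if m ∈ I then 0 else 1 := by
  rw [lfun_apply]
  simp only [Pi.zero_apply, Finset.sum_const_zero, zero_add, Pi.single_apply,
    Finset.sum_ite_eq', Finset.mem_compl]
  by_cases h : m ∈ I <;> simp [h]

lemma lfun_ones {k : ℕ} (I : Finset (Fin k)) :
    lfun k I ((fun _ => 1), (fun _ => 1)) = k := by
  rw [lfun_apply]
  simp only [Finset.sum_const, nsmul_eq_mul, mul_one]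
  rw [← Nat.cast_add, Finset.card_add_card_compl]
  simp

lemma three_dep {E : Type*} [AddCommGroup E] [Module ℝ E] [FiniteDimensional ℝ E]
    (W : Submodule ℝ E) (hW : finrank ℝ E ≤ finrank ℝ W + 2)
    (f g h : E →ₗ[ℝ] ℝ) (hf : ∀ x ∈ W, f x = 0) (hg : ∀ x ∈ W, g x = 0)
    (hh : ∀ x ∈ W, h x = 0) :
    ∃ a b c : ℝ, (a ≠ 0 ∨ b ≠ 0 ∨ c ≠ 0) ∧ a • f + b • g + c • h = 0 := by
  have hQ : finrank ℝ (E ⧸ W) ≤ 2 := by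
    have := Submodule.finrank_quotient_add_finrank W
    omega
  have hfW : W ≤ LinearMap.ker f := fun x hx => LinearMap.mem_ker.mpr (hf x hx)
  have hgW : W ≤ LinearMap.ker g := fun x hx => LinearMap.mem_ker.mpr (hg x hx)
  have hhW : W ≤ LinearMap.ker h := fun x hx => LinearMap.mem_ker.mpr (hh x hx)
  set F : Fin 3 → ((E ⧸ W) →ₗ[ℝ] ℝ) := ![W.liftQ f hfW, W.liftQ g hgW, W.liftQ h hhW] with hF
  have hdep : ¬ LinearIndependent ℝ F := by
    intro hind
    have h1 := hind.fintype_card_le_finrank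
    have h2 : finrank ℝ ((E ⧸ W) →ₗ[ℝ] ℝ) = finrank ℝ (E ⧸ W) :=
      Subspace.dual_finrank_eq
    simp [h2] at h1
    omega
  obtain ⟨coef, hsum, i, hi⟩ := Fintype.not_linearIndependent_iff.mp hdep
  refine ⟨coef 0, coef 1, coef 2, ?_, ?_⟩
  · fin_cases i
    · exact Or.inl hi
    · exact Or.inr (Or.inl hi)
    · exact Or.inr (Or.inr hi)
  · ext x
    have := LinearMap.congr_fun hsum (W.mkQ x)
    simpa [hF, Fin.sum_univ_three, Submodule.liftQ_apply] using this

lemma eq_zero_of_vanish {k : ℕ} (f : ((Fin k → ℝ) × (Fin k → ℝ)) →ₗ[ℝ] ℝ)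
    (h1 : ∀ m, f (Pi.single m 1, Pi.single m 1) = 0)
    (h2 : ∀ m, f ((0 : Fin k → ℝ), Pi.single m 1) = 0) : f = 0 := by
  refine LinearMap.ext fun p => ?_
  obtain ⟨x, y⟩ := p
  have hdecomp : (x, y) =
      (∑ m, x m • ((Pi.single m 1, Pi.single m 1) : (Fin k → ℝ) × (Fin k → ℝ)))
      + (∑ m, (y m - x m) • (((0 : Fin k → ℝ), Pi.single m 1) :
          (Fin k → ℝ) × (Fin k → ℝ))) := by
    rw [Prod.ext_iff]
    constructor
    · funext n
      simp [Prod.fst_sum, Finset.sum_apply, Pi.single_apply, mul_ite, Finset.sum_ite_eq']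
    · funext n
      simp [Prod.snd_sum, Finset.sum_apply, Pi.single_apply, mul_ite, Finset.sum_ite_eq']
  rw [hdecomp]
  simp only [map_add, map_sum, map_smul, h1, h2, smul_eq_mul, mul_zero,
    Finset.sum_const_zero, add_zero, LinearMap.zero_apply]

end Stmt4Aux


set_option maxHeartbeats 1000000 in
open Stmt4Aux Module in
/-- Non-generic case of linear forms restricted to the hyperplane
Π_I = {(x,y) : Σ_{i∈I} x_i + Σ_{i∉I} y_i = 0}: if s forms of Ψ have pairwise distinct
restrictions to Π_I which all agree on a subspace of codimension at most 1 inside Π_I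
(i.e. of dimension ≥ 2k−2), then s ≤ k. -/
theorem stmt4 (k s : ℕ) (hk : 2 ≤ k) (I : Finset (Fin k))
    (v : Fin s → Fin k) (J : Fin s → Finset (Fin k)) (hv : ∀ j, v j ∈ J j)
    (hdistinct : ∀ j j' : Fin s, j ≠ j' → ∃ p : (Fin k → ℝ) × (Fin k → ℝ),
      (∑ i ∈ I, p.1 i) + (∑ i ∈ Iᶜ, p.2 i) = 0 ∧
      psiVI k (v j) (J j) p.1 p.2 ≠ psiVI k (v j') (J j') p.1 p.2)
    (W : Submodule ℝ ((Fin k → ℝ) × (Fin k → ℝ)))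
    (hW : ∀ p : (Fin k → ℝ) × (Fin k → ℝ), p ∈ W ↔
      ((∑ i ∈ I, p.1 i) + (∑ i ∈ Iᶜ, p.2 i) = 0 ∧
        ∀ j j' : Fin s, psiVI k (v j) (J j) p.1 p.2 = psiVI k (v j') (J j') p.1 p.2))
    (hcodim : 2 * k - 2 ≤ Module.finrank ℝ W) :
    s ≤ k := by
  by_contra hs
  push_neg at hs
  have hs3 : 3 ≤ s := by omega
  have hE : finrank ℝ ((Fin k → ℝ) × (Fin k → ℝ)) = 2 * k := by
    rw [Module.finrank_prod]
    simp [Module.finrank_pi]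
    ring
  set j0 : Fin s := ⟨0, by omega⟩ with hj0
  set j1 : Fin s := ⟨1, by omega⟩ with hj1
  have hj01 : j1 ≠ j0 := by simp [hj0, hj1, Fin.ext_iff]
  set Ψ : Fin s → (((Fin k → ℝ) × (Fin k → ℝ)) →ₗ[ℝ] ℝ) := fun j => psiL k (v j) (J j) with hΨ
  set L : ((Fin k → ℝ) × (Fin k → ℝ)) →ₗ[ℝ] ℝ := lfun k I with hL
  have hmemW : ∀ p ∈ W, L p = 0 ∧ ∀ j j' : Fin s, Ψ j p = Ψ j' p := by
    intro p hp
    exact (hW p).mp hp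
  -- no difference is a multiple of L
  have hnotL : ∀ j j' : Fin s, j ≠ j' → ∀ t : ℝ, Ψ j - Ψ j' ≠ t • L := by
    intro j j' hjj t heq
    obtain ⟨p, hp0, hpne⟩ := hdistinct j j' hjj
    have h1 := LinearMap.congr_fun heq p
    simp only [LinearMap.sub_apply, LinearMap.smul_apply, smul_eq_mul] at h1
    have h2 : L p = 0 := hp0
    rw [h2, mul_zero, sub_eq_zero] at h1
    exact hpne h1
  -- the key representation
  have key : ∀ j : Fin s, ∃ t c : ℝ, Ψ j = Ψ j0 + t • L + c • (Ψ j1 - Ψ j0) := by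
    intro j
    by_cases hj : j = j0
    · exact ⟨0, 0, by simp [hj]⟩
    · have hcod2 : finrank ℝ ((Fin k → ℝ) × (Fin k → ℝ)) ≤ finrank ℝ W + 2 := by omega
      obtain ⟨a, b, cc, hne, hsum⟩ := three_dep W hcod2 L (Ψ j1 - Ψ j0) (Ψ j - Ψ j0)
        (fun x hx => (hmemW x hx).1)
        (fun x hx => by
          simp only [LinearMap.sub_apply]
          rw [(hmemW x hx).2 j1 j0, sub_self])
        (fun x hx => by
          simp only [LinearMap.sub_apply]
          rw [(hmemW x hx).2 j j0, sub_self])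
      have hLk : L ((fun _ => (1:ℝ)), (fun _ => (1:ℝ))) = k := lfun_ones I
      have hLne : ∀ a : ℝ, a ≠ 0 → a • L ≠ 0 := by
        intro a ha h0
        have := LinearMap.congr_fun h0 ((fun _ => (1:ℝ)), (fun _ => (1:ℝ)))
        rw [LinearMap.smul_apply, hLk] at this
        simp only [LinearMap.zero_apply, smul_eq_mul] at this
        rcases mul_eq_zero.mp this with h | h
        · exact ha h
        · exact Nat.cast_ne_zero.mpr (by omega) h
      have hcc : cc ≠ 0 := by
        intro h0
        subst h0
        by_cases hb : b = 0
        · subst hb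
          have ha : a ≠ 0 := by tauto
          apply hLne a ha
          have := hsum
          refine LinearMap.ext fun x => ?_
          have h2 := LinearMap.congr_fun hsum x
          simpa using h2
        · apply hnotL j1 j0 hj01 (-a/b)
          refine LinearMap.ext fun x => ?_
          have h2 := LinearMap.congr_fun hsum x
          simp only [LinearMap.add_apply, LinearMap.smul_apply, LinearMap.sub_apply,
            LinearMap.zero_apply, smul_eq_mul, zero_mul, add_zero] at h2 ⊢
          field_simp
          linarith
      refine ⟨-a/cc, -b/cc, ?_⟩
      refine LinearMap.ext fun x => ?_
      have h2 := LinearMap.congr_fun hsum x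
      simp only [LinearMap.add_apply, LinearMap.smul_apply, LinearMap.sub_apply,
        LinearMap.zero_apply, smul_eq_mul] at h2 ⊢
      field_simp
      ring_nf
      ring_nf at h2
      linarith
  choose t c hrel using key
  -- distinctness of the c j
  have hcdist : ∀ j j' : Fin s, c j = c j' → j = j' := by
    intro j j' hcc
    by_contra hjj
    apply hnotL j j' hjj (t j - t j')
    rw [hrel j, hrel j', hcc]
    refine LinearMap.ext fun x => ?_
    simp only [LinearMap.add_apply, LinearMap.sub_apply, LinearMap.smul_apply, smul_eq_mul]
    ring
  -- evaluations
  have heΨxx : ∀ (j : Fin s) (m : Fin k), Ψ j (Pi.single m 1, Pi.single m 1) = (v j : ℝ) - m :=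
    fun j m => psiL_xx (v j) (J j) m
  have heΨy : ∀ (j : Fin s) (m : Fin k), Ψ j ((0 : Fin k → ℝ), Pi.single m 1)
      = if m ∈ J j then 0 else (v j : ℝ) - m := fun j m => psiL_y (v j) (J j) m
  have heLxx : ∀ m : Fin k, L (Pi.single m 1, Pi.single m 1) = 1 := fun m => lfun_xx I m
  have heLy : ∀ m : Fin k, L ((0 : Fin k → ℝ), Pi.single m 1) = if m ∈ I then 0 else 1 :=
    fun m => lfun_y I m
  -- t formula
  have tval : ∀ j : Fin s, t j = ((v j : ℝ) - (v j0 : ℝ)) - c j * ((v j1 : ℝ) - (v j0 : ℝ)) := by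
    intro j
    have h := LinearMap.congr_fun (hrel j) (Pi.single (⟨0, by omega⟩ : Fin k) 1,
      Pi.single (⟨0, by omega⟩ : Fin k) 1)
    simp only [LinearMap.add_apply, LinearMap.smul_apply, LinearMap.sub_apply, smul_eq_mul,
      heΨxx, heLxx, mul_one] at h
    linear_combination -h
  set A : Fin s → Fin k → ℝ := fun j m => if m ∈ J j then 0 else (v j : ℝ) - m with hA
  set χ : Fin k → ℝ := fun m => if m ∈ I then 0 else 1 with hχ
  have heval : ∀ (j : Fin s) (m : Fin k),
      A j m = A j0 m + t j * χ m + c j * (A j1 m - A j0 m) := by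
    intro j m
    have h := LinearMap.congr_fun (hrel j) ((0 : Fin k → ℝ), Pi.single m 1)
    simp only [LinearMap.add_apply, LinearMap.smul_apply, LinearMap.sub_apply, smul_eq_mul,
      heΨy, heLy] at h
    exact h
  set g : Fin s → Fin k → ℝ := fun j m => A j m - ((v j : ℝ) - m) * χ m with hg
  set w : Fin k → ℝ := fun m => (A j1 m - A j0 m) - ((v j1 : ℝ) - (v j0 : ℝ)) * χ m with hw
  have hgrel : ∀ (j : Fin s) (m : Fin k), g j m = g j0 m + c j * w m := by
    intro j m
    simp only [hg, hw]
    have h1 := heval j m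
    have h2 := tval j
    linear_combination h1 + χ m * h2
  -- some coordinate of w is nonzero
  have hwne : ∃ m, w m ≠ 0 := by
    by_contra hc
    push_neg at hc
    have hzero : Ψ j1 - Ψ j0 - ((v j1 : ℝ) - (v j0 : ℝ)) • L = 0 := by
      apply eq_zero_of_vanish
      · intro m
        simp only [LinearMap.sub_apply, LinearMap.smul_apply, smul_eq_mul,
          heΨxx, heLxx, mul_one]
        ring
      · intro m
        have := hc m
        simp only [hw, hA, hχ] at this
        simp only [LinearMap.sub_apply, LinearMap.smul_apply, smul_eq_mul, heΨy, heLy]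
        linarith
    apply hnotL j1 j0 hj01 ((v j1 : ℝ) - (v j0 : ℝ))
    refine LinearMap.ext fun x => ?_
    have := LinearMap.congr_fun hzero x
    simp only [LinearMap.sub_apply, LinearMap.smul_apply, LinearMap.zero_apply,
      smul_eq_mul] at this ⊢
    linarith
  obtain ⟨m, hm⟩ := hwne
  have ginj : Function.Injective (fun j : Fin s => g j m) := by
    intro j j' h
    simp only at h
    rw [hgrel j, hgrel j'] at h
    have : c j = c j' := by
      have := mul_right_cancel₀ hm (by linarith : c j * w m = c j' * w m)
      exact this
    exact hcdist j j' this
  by_cases hmI : m ∈ I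
  · set F : Fin s → Fin k := fun j => if m ∈ J j then m else v j with hF
    have hFval : ∀ j, (F j : ℝ) - m = g j m := by
      intro j
      simp only [hF, hg, hA, hχ, hmI, if_pos, ite_self]
      by_cases h : m ∈ J j <;> simp [h]
    have hFinj : Function.Injective F := by
      intro j j' h
      apply ginj
      simp only
      rw [← hFval j, ← hFval j', h]
    have := Fintype.card_le_of_injective F hFinj
    simp at this
    omega
  · set F : Fin s → Fin k := fun j => if m ∈ J j then v j else m with hF
    have hFval : ∀ j, (m : ℝ) - F j = g j m := by
      intro j
      simp only [hF, hg, hA, hχ, hmI, if_neg, ite_self]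
      by_cases h : m ∈ J j <;> simp [h] <;> ring
    have hFinj : Function.Injective F := by
      intro j j' h
      apply ginj
      simp only
      rw [← hFval j, ← hFval j', h]
    have := Fintype.card_le_of_injective F hFinj
    simp at this
    omega
end

section
/- For every linear subvariety Π ⊆ ℝ^k × ℝ^k of codimension 1, the number of distinct linear forms obtained by restricting the forms in Ψ to Π is at least (k+1)·2^{k−2}. -/
open Finset Module

theorem Subspace.exists_forall_mem_dualAnnihilator_eq_smul {K V : Type*} [Field K]
    [AddCommGroup V] [Module K V] [FiniteDimensional K V] {P : Subspace K V}
    (hP : finrank K P + 1 = finrank K V) :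
    ∃ φ : Dual K V, φ ≠ 0 ∧ ∀ f ∈ P.dualAnnihilator, ∃ l : K, f = l • φ := by
  have h1 : finrank K P.dualAnnihilator = 1 := by
    have := P.finrank_add_finrank_dualAnnihilator_eq
    omega
  have := Module.Free.of_divisionRing K P.dualAnnihilator
  obtain ⟨φ, hφ, hall⟩ := (finrank_eq_one_iff' (K := K) (V := P.dualAnnihilator)).mp h1
  refine ⟨φ, fun h => hφ (Subtype.ext h), fun f hf => ?_⟩
  obtain ⟨l, hl⟩ := hall ⟨f, hf⟩
  exact ⟨l, (congrArg Subtype.val hl).symm⟩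

theorem two_mul_card_le_two_mul_card_image_add {ι M : Type*} [DecidableEq ι] [DecidableEq M]
    (s : Finset ι) (f : ι → M) :
    2 * #s ≤ 2 * #(s.image f) + #{e ∈ s ×ˢ s | e.1 ≠ e.2 ∧ f e.1 = f e.2} := by
  set fiber := fun y => {a ∈ s | f a = y}
  have hpairs : #{e ∈ s ×ˢ s | e.1 ≠ e.2 ∧ f e.1 = f e.2} =
      ∑ y ∈ s.image f, #(fiber y).offDiag := by
    rw [card_eq_sum_card_fiberwise (f := fun e => f e.1) (t := s.image f)]
    · refine sum_congr rfl fun y _ => congrArg card ?_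
      ext ⟨a, b⟩
      simp only [fiber, mem_filter, mem_product, mem_offDiag]
      grind
    · intro e he
      exact mem_image_of_mem f (mem_product.mp (mem_filter.mp he).1).1
  rw [hpairs, card_eq_sum_card_image f s, card_eq_sum_ones (s.image f), mul_sum, mul_sum,
    ← sum_add_distrib]
  refine sum_le_sum fun y hy => ?_
  have hm : 0 < #(fiber y) := by
    obtain ⟨a, ha, rfl⟩ := mem_image.mp hy
    exact card_pos.mpr ⟨a, mem_filter.mpr ⟨ha, rfl⟩⟩
  rw [offDiag_card, ← Nat.mul_sub_one]
  rcases Nat.lt_or_ge (#(fiber y)) 2 with h2 | h2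
  · interval_cases #(fiber y); simp
  · nlinarith [Nat.sub_add_cancel hm]

theorem iff_of_ite_eq_ite {R : Type*} [Zero R] {x : R} (hx : x ≠ 0) {A B : Prop} [Decidable A]
    [Decidable B] (h : (if A then x else 0) = if B then x else 0) : A ↔ B := by
  split_ifs at h <;> simp_all

theorem iff_of_ite_sub_ite_eq {R : Type*} [AddCommGroup R] {x y : R} (hx : x ≠ 0) (hxy : x ≠ y)
    (hxy' : x ≠ -y) {A B A' B' : Prop} [Decidable A] [Decidable B] [Decidable A'] [Decidable B']
    (h : (if A then x else 0) - (if B then y else 0) =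
      (if A' then x else 0) - if B' then y else 0) :
    A ↔ A' := by
  split_ifs at h <;> grind

theorem Fin.eq_of_natCast_val_eq {R : Type*} [AddMonoidWithOne R] [CharZero R] {n : ℕ}
    {a b : Fin n} (h : ((a : ℕ) : R) = b) : a = b :=
  Fin.ext (Nat.cast_injective h)

theorem ite_eq_ite_of_ne_of_ne {R : Type*} [Zero R] {x : R} {A B C : Prop} [Decidable A]
    [Decidable B] [Decidable C] (hB : (if A then x else 0) ≠ if B then x else 0)
    (hC : (if A then x else 0) ≠ if C then x else 0) :
    (if B then x else 0) = if C then x else 0 := by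
  split_ifs at hB hC ⊢ <;> simp_all

variable {k : ℕ}

def coeffX (p : Fin k × Finset (Fin k)) (i : Fin k) : ℝ :=
  if i ∈ p.2 then (p.1 : ℝ) - i else 0

def coeffY (p : Fin k × Finset (Fin k)) (i : Fin k) : ℝ :=
  if i ∈ p.2 then 0 else (p.1 : ℝ) - i

theorem coeffX_add_coeffY (p : Fin k × Finset (Fin k)) (i : Fin k) :
    coeffX p i + coeffY p i = p.1 - i := by
  unfold coeffX coeffY
  split_ifs <;> ring

noncomputable def psiDual (p : Fin k × Finset (Fin k)) :
    Dual ℝ ((Fin k → ℝ) × (Fin k → ℝ)) where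
  toFun z := psiVI k p.1 p.2 z.1 z.2
  map_add' z w := by
    simp only [psiVI, ← sum_add_distrib]
    refine sum_congr rfl fun i _ => ?_
    split_ifs <;> simp only [Prod.fst_add, Prod.snd_add, Pi.add_apply, mul_add]
  map_smul' c z := by
    simp only [psiVI, RingHom.id_apply, smul_eq_mul, mul_sum]
    refine sum_congr rfl fun i _ => ?_
    split_ifs <;> simp only [Prod.smul_fst, Prod.smul_snd, Pi.smul_apply, smul_eq_mul] <;> ring

theorem psiDual_single_zero (p : Fin k × Finset (Fin k)) (i : Fin k) :
    psiDual p (Pi.single i 1, 0) = coeffX p i := by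
  simp only [psiDual, LinearMap.coe_mk, AddHom.coe_mk, psiVI]
  rw [sum_eq_single i (fun j _ hj => by simp [Pi.single_eq_of_ne hj]) (by simp)]
  simp [coeffX]

theorem psiDual_zero_single (p : Fin k × Finset (Fin k)) (i : Fin k) :
    psiDual p (0, Pi.single i 1) = coeffY p i := by
  simp only [psiDual, LinearMap.coe_mk, AddHom.coe_mk, psiVI]
  rw [sum_eq_single i (fun j _ hj => by simp [Pi.single_eq_of_ne hj]) (by simp)]
  simp [coeffY]

def DiffProportional (α β : Fin k → ℝ) (p q : Fin k × Finset (Fin k)) : Prop :=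
  ∃ l : ℝ, ∀ i, coeffX p i - coeffX q i = l * α i ∧ coeffY p i - coeffY q i = l * β i

theorem diffProportional_of_restrict_eq {P : Submodule ℝ ((Fin k → ℝ) × (Fin k → ℝ))}
    {φ : Dual ℝ ((Fin k → ℝ) × (Fin k → ℝ))} (hφ : ∀ f ∈ P.dualAnnihilator, ∃ l : ℝ, f = l • φ)
    {p q : Fin k × Finset (Fin k)}
    (h : (fun z : P => psiVI k p.1 p.2 z.val.1 z.val.2) =
      fun z : P => psiVI k q.1 q.2 z.val.1 z.val.2) :
    DiffProportional (fun i => φ (Pi.single i 1, 0)) (fun i => φ (0, Pi.single i 1)) p q := by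
  obtain ⟨l, hl⟩ := hφ (psiDual p - psiDual q) <| (Submodule.mem_dualAnnihilator _).mpr
    fun z hz => sub_eq_zero.mpr (congrFun h ⟨z, hz⟩)
  refine ⟨l, fun i => ⟨?_, ?_⟩⟩
  · simpa [psiDual_single_zero] using LinearMap.congr_fun hl (Pi.single i 1, 0)
  · simpa [psiDual_zero_single] using LinearMap.congr_fun hl (0, Pi.single i 1)

theorem exists_ne_zero_single_of_ne_zero {φ : Dual ℝ ((Fin k → ℝ) × (Fin k → ℝ))} (hφ : φ ≠ 0) :
    ∃ i, φ (Pi.single i 1, 0) ≠ 0 ∨ φ (0, Pi.single i 1) ≠ 0 := by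
  contrapose! hφ
  ext i <;> simp [hφ i]

theorem card_filter_mem_eq_two_pow (v : Fin k) : #{I : Finset (Fin k) | v ∈ I} = 2 ^ (k - 1) := by
  have : 2 ^ (k - 1) = #(univ.erase v).powerset := by simp
  rw [this]
  refine card_nbij' (fun I => I.erase v) (insert v) ?_ ?_ ?_ ?_ <;> intro I hI <;>
    simp only [coe_filter, mem_univ, true_and, Set.mem_ofPred_eq, coe_powerset,
      Set.mem_preimage] at hI ⊢
  · exact erase_subset_erase v (subset_univ I)
  · exact mem_insert_self v I
  · exact insert_erase hI
  · exact erase_insert fun hv => by simpa using hI hv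

def pointedSubsets (k : ℕ) : Finset (Fin k × Finset (Fin k)) := {p | p.1 ∈ p.2}

theorem card_pointed_filter_mem (t : Finset (Fin k)) :
    #{p ∈ pointedSubsets k | p.1 ∈ t} = #t * 2 ^ (k - 1) := by
  rw [card_eq_sum_card_fiberwise (f := Prod.fst) (t := t), ← smul_eq_mul, ← sum_const]
  · refine sum_congr rfl fun v hv => ?_
    rw [← card_filter_mem_eq_two_pow v]
    refine card_nbij' Prod.snd (fun I => (v, I)) ?_ ?_ ?_ ?_ <;> intro p hp <;>
      simp only [pointedSubsets, coe_filter, mem_filter, mem_univ, true_and,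
        Set.mem_ofPred_eq] at hp ⊢
    · exact hp.2 ▸ hp.1.1
    · exact ⟨⟨hp, hv⟩, trivial⟩
    · exact Prod.ext hp.2.symm rfl
  · intro p hp
    exact (mem_filter.mp hp).2

theorem eq_of_coeff_eq {p q : Fin k × Finset (Fin k)} (hp : p ∈ pointedSubsets k)
    (hq : q ∈ pointedSubsets k)
    (hx : ∀ i, coeffX p i = coeffX q i) (hy : ∀ i, coeffY p i = coeffY q i) : p = q := by
  have hv : p.1 = q.1 := by
    have := coeffX_add_coeffY p p.1
    rw [hx, hy, coeffX_add_coeffY] at this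
    exact Fin.eq_of_natCast_val_eq (R := ℝ) (by linarith)
  refine Prod.ext hv (Finset.ext fun i => ?_)
  by_cases hi : i = p.1
  · simp only [pointedSubsets, mem_filter, mem_univ, true_and] at hp hq
    exact iff_of_true (hi ▸ hp) (hi ▸ hv ▸ hq)
  · refine iff_of_ite_eq_ite (x := (p.1 : ℝ) - i) ?_ ?_
    · exact sub_ne_zero.mpr fun h => hi (Fin.eq_of_natCast_val_eq h).symm
    · simpa only [coeffX, hv] using hx i

theorem sub_eq_mul_add_of_coeff_sub {p q : Fin k × Finset (Fin k)} {i : Fin k} {l a b : ℝ}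
    (hx : coeffX p i - coeffX q i = l * a) (hy : coeffY p i - coeffY q i = l * b) :
    (p.1 : ℝ) - q.1 = l * (a + b) := by
  linear_combination hx + hy - coeffX_add_coeffY p i + coeffX_add_coeffY q i

open Classical in
noncomputable def collisions (α β : Fin k → ℝ) :
    Finset ((Fin k × Finset (Fin k)) × (Fin k × Finset (Fin k))) :=
  {e ∈ pointedSubsets k ×ˢ pointedSubsets k | e.1 ≠ e.2 ∧ DiffProportional α β e.1 e.2}

theorem exists_coeff_sub_eq_of_mem_collisions {α β : Fin k → ℝ} {e} (he : e ∈ collisions α β) :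
    e.1 ∈ pointedSubsets k ∧ e.2 ∈ pointedSubsets k ∧ ∃ l ≠ 0, ∀ i,
      coeffX e.1 i - coeffX e.2 i = l * α i ∧ coeffY e.1 i - coeffY e.2 i = l * β i := by
  simp only [collisions, mem_filter, mem_product] at he
  obtain ⟨⟨hp, hq⟩, hne, l, hl⟩ := he
  refine ⟨hp, hq, l, fun hl0 => hne (eq_of_coeff_eq hp hq (fun i => ?_) fun i => ?_), hl⟩
  · simpa [hl0, sub_eq_zero] using (hl i).1
  · simpa [hl0, sub_eq_zero] using (hl i).2

theorem card_collisions_le_of_add_eq_zero {α β : Fin k → ℝ} (hαβ : ∀ i, α i + β i = 0)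
    {j : Fin k} (hj : α j ≠ 0) : #(collisions α β) ≤ (k - 1) * 2 ^ (k - 1) := by
  have hv : ∀ e ∈ collisions α β, e.2.1 = e.1.1 := by
    intro e he
    obtain ⟨-, -, l, -, hl⟩ := exists_coeff_sub_eq_of_mem_collisions he
    have := sub_eq_mul_add_of_coeff_sub (hl j).1 (hl j).2
    rw [hαβ, mul_zero, sub_eq_zero] at this
    exact (Fin.eq_of_natCast_val_eq this).symm
  have hx : ∀ e ∈ collisions α β, coeffX e.2 j ≠ coeffX e.1 j := by
    intro e he
    obtain ⟨-, -, l, hl0, hl⟩ := exists_coeff_sub_eq_of_mem_collisions he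
    exact fun h => mul_ne_zero hl0 hj (by rw [← (hl j).1, h, sub_self])
  calc #(collisions α β) ≤ #{p ∈ pointedSubsets k | p.1 ∈ univ.erase j} := by
        refine card_le_card_of_injOn Prod.fst (fun e he => ?_) fun e he e' he' hee' => ?_
        · obtain ⟨hp, -⟩ := exists_coeff_sub_eq_of_mem_collisions he
          refine mem_filter.mpr ⟨hp, mem_erase.mpr ⟨fun hej => hx e he ?_, mem_univ _⟩⟩
          simp [coeffX, hv e he, hej]
        · obtain ⟨-, hq, l, -, hl⟩ := exists_coeff_sub_eq_of_mem_collisions he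
          obtain ⟨-, hq', l', -, hl'⟩ := exists_coeff_sub_eq_of_mem_collisions he'
          have hxj : coeffX e.2 j = coeffX e'.2 j := by
            have h := hx e he
            have h' := hx e' he'
            simp only [coeffX, hv e he, hv e' he', ← hee'] at h h' ⊢
            exact ite_eq_ite_of_ne_of_ne (Ne.symm h) (Ne.symm h')
          have hll : l = l' := mul_right_cancel₀ hj <| by
            rw [← (hl j).1, ← (hl' j).1, hxj, hee']
          rw [hee', hll] at hl
          refine Prod.ext hee' (eq_of_coeff_eq hq hq' (fun i => ?_) fun i => ?_)
          · linear_combination (hl' i).1 - (hl i).1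
          · linear_combination (hl' i).2 - (hl i).2
    _ = (k - 1) * 2 ^ (k - 1) := by
        rw [card_pointed_filter_mem, card_erase_of_mem (mem_univ j), card_univ, Fintype.card_fin]

theorem eq_and_eq_of_coeffX_sub_eq {p q p' q' : Fin k × Finset (Fin k)} (hp : p ∈ pointedSubsets k)
    (hq : q ∈ pointedSubsets k) (hp' : p' ∈ pointedSubsets k) (hq' : q' ∈ pointedSubsets k)
    (hv : p.1 = p'.1) (hw : q.1 = q'.1) (hvw : p.1 ≠ q.1)
    (hmid : ∀ i : Fin k, 2 * (i : ℕ) = p.1 + q.1 → (i ∈ p.2 ↔ i ∈ p'.2))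
    (h : ∀ i, coeffX p i - coeffX q i = coeffX p' i - coeffX q' i) : p = p' ∧ q = q' := by
  simp only [pointedSubsets, mem_filter, mem_univ, true_and] at hp hq hp' hq'
  have hI : ∀ i, i ∈ p.2 ↔ i ∈ p'.2 := by
    intro i
    by_cases hiv : i = p.1
    · exact iff_of_true (hiv ▸ hp) (hiv ▸ hv ▸ hp')
    by_cases him : 2 * (i : ℕ) = p.1 + q.1
    · exact hmid i him
    have hi := h i
    simp only [coeffX, ← hv, ← hw] at hi
    refine iff_of_ite_sub_ite_eq ?_ ?_ ?_ hi
    · exact sub_ne_zero.mpr fun h => hiv (Fin.eq_of_natCast_val_eq h).symm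
    · exact fun h => hvw (Fin.eq_of_natCast_val_eq (R := ℝ) (by linarith))
    · refine fun h => him ?_
      exact_mod_cast (by linarith : 2 * (i : ℝ) = p.1 + q.1)
  have hJ : ∀ i, i ∈ q.2 ↔ i ∈ q'.2 := by
    intro i
    by_cases hiw : i = q.1
    · exact iff_of_true (hiw ▸ hq) (hiw ▸ hw ▸ hq')
    have hi := h i
    simp only [coeffX, ← hv, ← hw, hI i, sub_right_inj] at hi
    exact iff_of_ite_eq_ite (sub_ne_zero.mpr fun h => hiw (Fin.eq_of_natCast_val_eq h).symm) hi
  exact ⟨Prod.ext hv (Finset.ext hI), Prod.ext hw (Finset.ext hJ)⟩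

theorem card_offDiag_filter_even_le (hk : 2 ≤ k) :
    #{r ∈ (univ : Finset (Fin k)).offDiag | Even ((r.1 : ℕ) + r.2)} ≤ (k - 1) * (k - 2) := by
  have : (k - 1) * (k - 2) = #(univ : Finset (Fin (k - 1))).offDiag := by
    rw [offDiag_card, card_univ, Fintype.card_fin, ← Nat.mul_sub_one]
    congr 1
  rw [this]
  -- `min · (k - 2)` only merges `k - 2` and `k - 1`, which have different parities
  let f : Fin k → Fin (k - 1) := fun a => ⟨min a (k - 2), by omega⟩
  refine card_le_card_of_injOn (fun r => (f r.1, f r.2)) (fun r hr => ?_) fun r hr s hs hrs => ?_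
  · simp only [coe_filter, mem_offDiag, mem_univ, true_and, Set.mem_ofPred_eq, Nat.even_iff] at hr
    simp only [coe_offDiag, coe_univ, Set.mem_offDiag, Set.mem_univ, true_and, ne_eq, f,
      Fin.mk.injEq]
    have := Fin.val_ne_of_ne hr.1
    omega
  · simp only [coe_filter, mem_offDiag, mem_univ, true_and, Set.mem_ofPred_eq,
      Nat.even_iff] at hr hs
    simp only [f, Prod.mk.injEq, Fin.mk.injEq] at hrs
    have := Fin.val_ne_of_ne hr.1
    have := Fin.val_ne_of_ne hs.1
    ext <;> omega

theorem card_collisions_le_of_add_ne_zero (hk : 2 ≤ k) {α β : Fin k → ℝ} {i₀ : Fin k}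
    (hi₀ : α i₀ + β i₀ ≠ 0) : #(collisions α β) ≤ (k - 1) * 2 ^ (k - 1) := by
  have key : ∀ e ∈ collisions α β, e.1.1 ≠ e.2.1 ∧
      ∀ i, coeffX e.1 i - coeffX e.2 i = (e.1.1 - e.2.1 : ℝ) / (α i₀ + β i₀) * α i := by
    intro e he
    obtain ⟨-, -, l, hl0, hl⟩ := exists_coeff_sub_eq_of_mem_collisions he
    have h := sub_eq_mul_add_of_coeff_sub (hl i₀).1 (hl i₀).2
    refine ⟨fun hv => mul_ne_zero hl0 hi₀ (by rw [← h, hv, sub_self]), fun i => ?_⟩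
    rw [h, mul_div_cancel_right₀ _ hi₀]
    exact (hl i).1
  let bit : (Fin k × Finset (Fin k)) × (Fin k × Finset (Fin k)) → Bool :=
    fun e => decide (∃ m ∈ e.1.2, 2 * (m : ℕ) = e.1.1 + e.2.1)
  let G := {r ∈ (univ : Finset (Fin k)).offDiag | Even ((r.1 : ℕ) + r.2)}
  calc #(collisions α β) ≤ #(univ.offDiag ×ˢ {false} ∪ G ×ˢ {true}) := by
        refine card_le_card_of_injOn (fun e => ((e.1.1, e.2.1), bit e)) (fun e he => ?_)
          fun e he e' he' hee' => ?_
        · have hvw := (key e he).1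
          by_cases hm : ∃ m ∈ e.1.2, 2 * (m : ℕ) = e.1.1 + e.2.1
          · have : Even ((e.1.1 : ℕ) + e.2.1) := by
              obtain ⟨m, -, hm⟩ := hm
              exact ⟨m, by omega⟩
            simp [bit, G, hvw, this, hm]
          · simp [bit, hvw, hm]
        · simp only [Prod.mk.injEq, bit, decide_eq_decide] at hee'
          obtain ⟨⟨hv, hw⟩, hbit⟩ := hee'
          obtain ⟨hp, hq, -⟩ := exists_coeff_sub_eq_of_mem_collisions he
          obtain ⟨hp', hq', -⟩ := exists_coeff_sub_eq_of_mem_collisions he'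
          obtain ⟨hvw, hl⟩ := key e he
          obtain ⟨-, hl'⟩ := key e' he'
          refine Prod.ext_iff.mpr (eq_and_eq_of_coeffX_sub_eq hp hq hp' hq' hv hw hvw ?_ ?_)
          · intro i hi
            rw [← hv, ← hw] at hbit
            have hmid : ∀ m : Fin k, 2 * (m : ℕ) = e.1.1 + e.2.1 → m = i :=
              fun m hm => Fin.ext (by omega)
            constructor
            · intro hiI
              obtain ⟨m, hmI, hm⟩ := hbit.mp ⟨i, hiI, hi⟩
              exact hmid m hm ▸ hmI
            · intro hiI
              obtain ⟨m, hmI, hm⟩ := hbit.mpr ⟨i, hiI, hi⟩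
              exact hmid m hm ▸ hmI
          · intro i
            rw [hl, hl', hv, hw]
    _ ≤ k * (k - 1) + (k - 1) * (k - 2) := by
        grw [card_union_le, card_product, card_product, offDiag_card,
          card_offDiag_filter_even_le hk]
        simp [Nat.mul_sub_one]
    _ ≤ (k - 1) * 2 ^ (k - 1) := by
        obtain ⟨m, rfl⟩ := Nat.exists_eq_add_of_le' hk
        have := Nat.lt_two_pow_self (n := m)
        simp only [Nat.add_sub_cancel, Nat.add_succ_sub_one, pow_succ]
        nlinarith

theorem card_collisions_le (hk : 2 ≤ k) {α β : Fin k → ℝ} (h : ∃ i, α i ≠ 0 ∨ β i ≠ 0) :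
    #(collisions α β) ≤ (k - 1) * 2 ^ (k - 1) := by
  by_cases hαβ : ∀ i, α i + β i = 0
  · obtain ⟨j, hj⟩ := h
    refine card_collisions_le_of_add_eq_zero hαβ (j := j) fun hα => ?_
    have := hαβ j
    rcases hj with hj | hj <;> apply hj <;> linarith
  · push Not at hαβ
    obtain ⟨i₀, hi₀⟩ := hαβ
    exact card_collisions_le_of_add_ne_zero hk hi₀

open Classical in
/-- For every codimension-1 subspace Π of ℝ^k × ℝ^k, the number of distinct
restrictions to Π of the forms in Ψ = {ψ_{v,I} : v ∈ I ⊆ [k]} is at least (k+1)2^{k−2}. -/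
theorem stmt5 (k : ℕ) (hk : 2 ≤ k) (P : Submodule ℝ ((Fin k → ℝ) × (Fin k → ℝ)))
    (hP : Module.finrank ℝ P = 2 * k - 1) :
    (k + 1) * 2 ^ (k - 2) ≤
      ((Finset.univ.filter fun p : Fin k × Finset (Fin k) => p.1 ∈ p.2).image
        fun p => (fun z : P => psiVI k p.1 p.2 z.val.1 z.val.2)).card := by
  obtain ⟨φ, hφ0, hφ⟩ := Subspace.exists_forall_mem_dualAnnihilator_eq_smul (P := P)
    (by rw [hP, finrank_prod, finrank_fin_fun]; omega)
  set g := fun p : Fin k × Finset (Fin k) => fun z : P => psiVI k p.1 p.2 z.val.1 z.val.2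
  have hS : #(pointedSubsets k) = k * 2 ^ (k - 1) := by
    simpa using card_pointed_filter_mem (univ : Finset (Fin k))
  have hcoll : #{e ∈ pointedSubsets k ×ˢ pointedSubsets k | e.1 ≠ e.2 ∧ g e.1 = g e.2} ≤
      (k - 1) * 2 ^ (k - 1) :=
    le_trans (card_le_card fun e he => by
      simp only [collisions, mem_filter] at he ⊢
      exact ⟨he.1, he.2.1, diffProportional_of_restrict_eq hφ he.2.2⟩)
      (card_collisions_le hk (exists_ne_zero_single_of_ne_zero hφ0))
  have hcount := two_mul_card_le_two_mul_card_image_add (pointedSubsets k) g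
  change (k + 1) * 2 ^ (k - 2) ≤ #((pointedSubsets k).image g)
  obtain ⟨m, rfl⟩ := Nat.exists_eq_add_of_le' hk
  simp only [Nat.add_sub_cancel, Nat.add_succ_sub_one, pow_succ] at hS hcoll hcount ⊢
  nlinarith
end

section
/- For every linear subvariety Π ⊆ ℝ^k × ℝ^k of codimension 2, the number of distinct linear forms obtained by restricting the forms in Ψ to Π is at least 2^{k−1}. -/
open Finset Module

section CoordinateSubspaces

variable {K ι : Type*} [Field K] [Finite ι]

lemma Submodule.exists_forall_apply_eq_zero_imp_of_finrank_le_one [Nonempty ι]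
    {B : Submodule K (ι → K)} (hB : finrank K B ≤ 1) :
    ∃ j, ∀ b ∈ B, b j = 0 → b = 0 := by
  obtain ⟨⟨β, hβB⟩, hβ⟩ := finrank_le_one_iff.mp hB
  by_cases hβ0 : β = 0
  · refine ⟨Classical.arbitrary ι, fun b hb _ => ?_⟩
    obtain ⟨c, hc⟩ := hβ ⟨b, hb⟩
    simpa [hβ0, eq_comm] using congrArg Subtype.val hc
  · obtain ⟨j, hj⟩ := Function.ne_iff.mp hβ0
    refine ⟨j, fun b hb hbj => ?_⟩
    obtain ⟨c, hc⟩ := hβ ⟨b, hb⟩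
    have hb_eq : c • β = b := congrArg Subtype.val hc
    rw [← hb_eq, Pi.smul_apply, smul_eq_mul] at hbj
    rw [← hb_eq, (mul_eq_zero.mp hbj).resolve_right hj, zero_smul]

lemma Submodule.exists_ne_forall_apply_eq_zero_imp_of_finrank_le_two [Nontrivial ι]
    {A : Submodule K (ι → K)} (hA : finrank K A ≤ 2) {v : ι} (hv : ∃ a ∈ A, a v ≠ 0) :
    ∃ j ≠ v, ∀ a ∈ A, a v = 0 → a j = 0 → a = 0 := by
  obtain ⟨c, hcA, hcv⟩ := hv
  set B := A ⊓ LinearMap.ker (LinearMap.proj v : (ι → K) →ₗ[K] K)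
  have hBA : B < A := inf_lt_left.mpr fun hle => hcv (hle hcA)
  have hB : finrank K B ≤ 1 := by
    have := Submodule.finrank_lt_finrank_of_lt hBA
    omega
  obtain ⟨j, hj⟩ := exists_forall_apply_eq_zero_imp_of_finrank_le_one hB
  have hjB : ∀ a ∈ A, a v = 0 → a j = 0 → a = 0 := fun a ha hav => hj a ⟨ha, hav⟩
  by_cases hjv : j = v
  · obtain ⟨j', hj'⟩ := exists_ne v
    exact ⟨j', hj', fun a ha hav _ => hjB a ha hav (hjv ▸ hav)⟩
  · exact ⟨j, hjv, hjB⟩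

lemma Submodule.exists_apply_ne_zero_apply_ne_zero_of_two_le_finrank
    {A : Submodule K (ι → K)} (hA : 2 ≤ finrank K A) :
    ∃ v₁ v₂, v₁ ≠ v₂ ∧ (∃ a ∈ A, a v₁ ≠ 0) ∧ (∃ a ∈ A, a v₂ ≠ 0) := by
  obtain ⟨a, haA, ha0⟩ := Submodule.exists_mem_ne_zero_of_ne_bot
    (Submodule.one_le_finrank_iff.mp (by omega) : A ≠ ⊥)
  obtain ⟨v₁, hv₁⟩ := Function.ne_iff.mp ha0
  obtain ⟨b, hbA, hbv₁, hb0⟩ : ∃ b ∈ A, b v₁ = 0 ∧ b ≠ 0 := by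
    by_contra! h
    have hinj : Function.Injective ((LinearMap.proj v₁ : (ι → K) →ₗ[K] K) ∘ₗ A.subtype) :=
      fun b b' hbb' => Subtype.ext <| sub_eq_zero.mp <|
        h _ (sub_mem b.2 b'.2) (by simpa [sub_eq_zero] using hbb')
    have := LinearMap.finrank_le_finrank_of_injective hinj
    rw [finrank_self] at this
    omega
  obtain ⟨v₂, hv₂⟩ := Function.ne_iff.mp hb0
  exact ⟨v₁, v₂, fun h => hv₂ (h ▸ hbv₁), ⟨a, haA, hv₁⟩, ⟨b, hbA, hv₂⟩⟩

end CoordinateSubspaces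

namespace PsiFamily

variable {k : ℕ}

def psiForm (v : Fin k) (I : Finset (Fin k)) : Dual ℝ ((Fin k → ℝ) × (Fin k → ℝ)) where
  toFun z := psiVI k v I z.1 z.2
  map_add' z w := by
    simp only [psiVI, ← sum_add_distrib]
    refine sum_congr rfl fun i _ => ?_
    split_ifs <;> simp [mul_add]
  map_smul' c z := by
    simp only [psiVI, RingHom.id_apply, smul_eq_mul, mul_sum]
    refine sum_congr rfl fun i _ => ?_
    split_ifs <;> simp <;> ring

def diffForm (k : ℕ) : (Fin k → ℝ) →ₗ[ℝ] Dual ℝ ((Fin k → ℝ) × (Fin k → ℝ)) :=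
  (LinearMap.fst ℝ (Fin k → ℝ) (Fin k → ℝ) - LinearMap.snd ℝ (Fin k → ℝ) (Fin k → ℝ)).dualMap ∘ₗ
    (dotProductEquiv ℝ (Fin k)).toLinearMap

lemma diffForm_apply (a : Fin k → ℝ) (z : (Fin k → ℝ) × (Fin k → ℝ)) :
    diffForm k a z = a ⬝ᵥ (z.1 - z.2) := rfl

lemma diffForm_injective : Function.Injective (diffForm k) := by
  exact (LinearMap.dualMap_injective_of_surjective fun x => ⟨(x, 0), by simp⟩).comp
    (dotProductEquiv ℝ (Fin k)).injective

lemma diffForm_apply_one (a : Fin k → ℝ) : diffForm k a 1 = 0 := by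
  simp [diffForm_apply]

def coeff (v : Fin k) (I : Finset (Fin k)) : Fin k → ℝ :=
  fun i => if i ∈ I then (v : ℝ) - i else 0

lemma psiForm_eq_add (v : Fin k) (I : Finset (Fin k)) :
    psiForm v I = psiForm v ∅ + diffForm k (coeff v I) := by
  refine LinearMap.ext fun z => ?_
  rw [LinearMap.add_apply, diffForm_apply]
  simp only [dotProduct, coeff, psiForm, LinearMap.coe_mk, AddHom.coe_mk, psiVI, ← sum_add_distrib]
  refine sum_congr rfl fun i _ => ?_
  by_cases h : i ∈ I <;> simp [h]
  ring

lemma psiForm_sub_psiForm (v : Fin k) (I J : Finset (Fin k)) :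
    psiForm v I - psiForm v J = diffForm k (coeff v I - coeff v J) := by
  rw [psiForm_eq_add v I, psiForm_eq_add v J, map_sub]
  abel

lemma psiForm_apply_one (v : Fin k) (I : Finset (Fin k)) :
    psiForm v I 1 = ∑ i : Fin k, ((v : ℝ) - i) := by
  simp [psiForm, psiVI]

lemma psiForm_insert_self (v : Fin k) (I : Finset (Fin k)) :
    psiForm v (insert v I) = psiForm v I := by
  rw [psiForm_eq_add, psiForm_eq_add v I]
  congr 2
  ext i
  by_cases h : i = v <;> simp [coeff, h]

lemma eq_of_coeff_eq {v : Fin k} {I J : Finset (Fin k)} (hI : v ∉ I) (hJ : v ∉ J)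
    (h : coeff v I = coeff v J) : I = J := by
  have key : ∀ {I J : Finset (Fin k)}, v ∉ I → coeff v I = coeff v J → I ⊆ J := by
    intro I J hI h i hi
    have hiv : (v : ℝ) - i ≠ 0 :=
      sub_ne_zero.mpr fun h' => hI (Fin.ext (by exact_mod_cast h') ▸ hi)
    by_contra hiJ
    simpa [coeff, hi, hiJ, hiv] using congrFun h i
  exact (key hI h).antisymm (key hJ h.symm)

variable (P : Submodule ℝ ((Fin k → ℝ) × (Fin k → ℝ)))

def psiOn (p : Fin k × Finset (Fin k)) : P → ℝ :=
  fun z => psiVI k p.1 p.2 z.val.1 z.val.2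

lemma psiOn_eq_psiOn_iff (v w : Fin k) (I J : Finset (Fin k)) :
    psiOn P (v, I) = psiOn P (w, J) ↔ psiForm v I - psiForm w J ∈ P.dualAnnihilator := by
  rw [← P.dualRestrict_ker_eq_dualAnnihilator, LinearMap.mem_ker, map_sub, sub_eq_zero]
  exact DFunLike.coe_fn_eq (f := P.dualRestrict (psiForm v I))
    (g := P.dualRestrict (psiForm w J))

def diffAnnihilator : Submodule ℝ (Fin k → ℝ) :=
  P.dualAnnihilator.comap (diffForm k)

lemma finrank_dualAnnihilator (hP : finrank ℝ P = 2 * k - 2) (hk : 2 ≤ k) :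
    finrank ℝ P.dualAnnihilator = 2 := by
  have := Subspace.finrank_add_finrank_dualAnnihilator_eq P
  rw [Module.finrank_prod, Module.finrank_fin_fun, hP] at this
  omega

lemma finrank_map_diffAnnihilator :
    finrank ℝ ((diffAnnihilator P).map (diffForm k)) = finrank ℝ (diffAnnihilator P) :=
  (Submodule.equivMapOfInjective _ diffForm_injective _).finrank_eq.symm

lemma finrank_diffAnnihilator_le :
    finrank ℝ (diffAnnihilator P) ≤ finrank ℝ P.dualAnnihilator :=
  finrank_map_diffAnnihilator P ▸ Submodule.finrank_mono (Submodule.map_comap_le _ _)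

lemma one_mem_of_finrank_dualAnnihilator_le
    (h : finrank ℝ P.dualAnnihilator ≤ finrank ℝ (diffAnnihilator P)) : 1 ∈ P := by
  have hmap : (diffAnnihilator P).map (diffForm k) = P.dualAnnihilator :=
    Submodule.eq_of_le_of_finrank_le (Submodule.map_comap_le _ _)
      (finrank_map_diffAnnihilator P ▸ h)
  rw [← Subspace.dualAnnihilator_dualCoannihilator_eq (W := P), Submodule.mem_dualCoannihilator,
    ← hmap]
  rintro _ ⟨a, -, rfl⟩
  exact diffForm_apply_one a

lemma eq_of_psiOn_eq (h1 : 1 ∈ P) {v w : Fin k} {I J : Finset (Fin k)}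
    (h : psiOn P (v, I) = psiOn P (w, J)) : v = w := by
  have h0 := (Submodule.mem_dualAnnihilator _).mp ((psiOn_eq_psiOn_iff P v w I J).mp h) 1 h1
  rw [LinearMap.sub_apply, psiForm_apply_one, psiForm_apply_one, ← sum_sub_distrib] at h0
  simp only [sub_sub_sub_cancel_right, sum_const, card_univ, Fintype.card_fin, nsmul_eq_mul,
    mul_eq_zero, Nat.cast_eq_zero, v.pos.ne', false_or, sub_eq_zero] at h0
  exact Fin.ext (by exact_mod_cast h0)

lemma injOn_psiOn_insert {v : Fin k} {U : Finset (Fin k)} (hvU : v ∈ U)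
    (hU : ∀ a ∈ diffAnnihilator P, (∀ i ∈ U, a i = 0) → a = 0) :
    Set.InjOn (fun I => psiOn P (v, insert v I)) (Uᶜ.powerset : Set (Finset (Fin k))) := by
  intro I hI J hJ h
  simp only [coe_powerset, Set.mem_preimage, Set.mem_powerset_iff, coe_subset] at hI hJ
  have hmem := (psiOn_eq_psiOn_iff P v v _ _).mp h
  rw [psiForm_insert_self, psiForm_insert_self, psiForm_sub_psiForm] at hmem
  have hvI : v ∉ I := fun h => mem_compl.mp (hI h) hvU
  have hvJ : v ∉ J := fun h => mem_compl.mp (hJ h) hvU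
  refine eq_of_coeff_eq hvI hvJ (sub_eq_zero.mp (hU _ hmem fun i hi => ?_))
  have hiI : i ∉ I := fun h => mem_compl.mp (hI h) hi
  have hiJ : i ∉ J := fun h => mem_compl.mp (hJ h) hi
  simp [coeff, hiI, hiJ]

open Classical in
noncomputable def restrictedPsi : Finset (P → ℝ) :=
  (univ.filter fun p : Fin k × Finset (Fin k) => p.1 ∈ p.2).image (psiOn P)

open Classical in
lemma psiOn_insert_mem_restrictedPsi (v : Fin k) (I : Finset (Fin k)) :
    psiOn P (v, insert v I) ∈ restrictedPsi P :=
  mem_image_of_mem _ (by simp)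

lemma two_pow_le_card_restrictedPsi {v : Fin k} {U : Finset (Fin k)} (hvU : v ∈ U)
    (hU : ∀ a ∈ diffAnnihilator P, (∀ i ∈ U, a i = 0) → a = 0) :
    2 ^ #Uᶜ ≤ #(restrictedPsi P) := by
  rw [← card_powerset]
  exact card_le_card_of_injOn _ (fun I _ => psiOn_insert_mem_restrictedPsi P v I)
    (injOn_psiOn_insert P hvU hU)

lemma two_pow_add_two_pow_le_card_restrictedPsi (h1 : 1 ∈ P) {v₁ v₂ : Fin k}
    (hv : v₁ ≠ v₂) {U₁ U₂ : Finset (Fin k)} (hvU₁ : v₁ ∈ U₁) (hvU₂ : v₂ ∈ U₂)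
    (hU₁ : ∀ a ∈ diffAnnihilator P, (∀ i ∈ U₁, a i = 0) → a = 0)
    (hU₂ : ∀ a ∈ diffAnnihilator P, (∀ i ∈ U₂, a i = 0) → a = 0) :
    2 ^ #U₁ᶜ + 2 ^ #U₂ᶜ ≤ #(restrictedPsi P) := by
  rw [← card_powerset, ← card_powerset, ← card_disjSum]
  refine card_le_card_of_injOn
    (Sum.elim (fun I => psiOn P (v₁, insert v₁ I)) (fun I => psiOn P (v₂, insert v₂ I)))
    (by rintro (I | I) _ <;> exact psiOn_insert_mem_restrictedPsi P _ I) ?_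
  rintro (I | I) hI (J | J) hJ h
  · exact congrArg Sum.inl
      (injOn_psiOn_insert P hvU₁ hU₁ (inl_mem_disjSum.mp hI) (inl_mem_disjSum.mp hJ) h)
  · exact absurd (eq_of_psiOn_eq P h1 h) hv
  · exact absurd (eq_of_psiOn_eq P h1 h).symm hv
  · exact congrArg Sum.inr
      (injOn_psiOn_insert P hvU₂ hU₂ (inr_mem_disjSum.mp hI) (inr_mem_disjSum.mp hJ) h)

lemma two_pow_le_card_restrictedPsi_of_finrank_le_one (hk : k ≠ 0)
    (hA : finrank ℝ (diffAnnihilator P) ≤ 1) : 2 ^ (k - 1) ≤ #(restrictedPsi P) := by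
  have : NeZero k := ⟨hk⟩
  obtain ⟨v, hv⟩ := Submodule.exists_forall_apply_eq_zero_imp_of_finrank_le_one hA
  calc 2 ^ (k - 1) = 2 ^ #{v}ᶜ := by rw [card_compl, card_singleton, Fintype.card_fin]
    _ ≤ #(restrictedPsi P) :=
      two_pow_le_card_restrictedPsi P (mem_singleton_self v)
        fun a ha h => hv a ha (h v (mem_singleton_self v))

lemma two_pow_le_card_restrictedPsi_of_finrank_eq_two (hk : 2 ≤ k) (h1 : 1 ∈ P)
    (hA2 : finrank ℝ (diffAnnihilator P) = 2) : 2 ^ (k - 1) ≤ #(restrictedPsi P) := by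
  have : Nontrivial (Fin k) := Fin.nontrivial_iff_two_le.mpr hk
  obtain ⟨v₁, v₂, hv, hv₁, hv₂⟩ :=
    Submodule.exists_apply_ne_zero_apply_ne_zero_of_two_le_finrank hA2.ge
  obtain ⟨j₁, hj₁, hA₁⟩ :=
    Submodule.exists_ne_forall_apply_eq_zero_imp_of_finrank_le_two hA2.le hv₁
  obtain ⟨j₂, hj₂, hA₂⟩ :=
    Submodule.exists_ne_forall_apply_eq_zero_imp_of_finrank_le_two hA2.le hv₂
  calc 2 ^ (k - 1) = 2 ^ #{v₁, j₁}ᶜ + 2 ^ #{v₂, j₂}ᶜ := by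
        rw [card_compl, card_compl, card_pair hj₁.symm, card_pair hj₂.symm, Fintype.card_fin,
          ← two_mul, ← pow_succ']
        congr 1
        omega
    _ ≤ #(restrictedPsi P) :=
      two_pow_add_two_pow_le_card_restrictedPsi P h1 hv (mem_insert_self _ _) (mem_insert_self _ _)
        (fun a ha h => hA₁ a ha (h _ (mem_insert_self _ _)) (h _ (by simp)))
        (fun a ha h => hA₂ a ha (h _ (mem_insert_self _ _)) (h _ (by simp)))

end PsiFamily

open PsiFamily in
open Classical in
/-- For every codimension-2 subspace Π of ℝ^k × ℝ^k, the number of distinct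
restrictions to Π of the forms in Ψ = {ψ_{v,I} : v ∈ I ⊆ [k]} is at least 2^{k−1}. -/
theorem stmt6 (k : ℕ) (hk : 2 ≤ k) (P : Submodule ℝ ((Fin k → ℝ) × (Fin k → ℝ)))
    (hP : Module.finrank ℝ P = 2 * k - 2) :
    2 ^ (k - 1) ≤
      ((Finset.univ.filter fun p : Fin k × Finset (Fin k) => p.1 ∈ p.2).image
        fun p => (fun z : P => psiVI k p.1 p.2 z.val.1 z.val.2)).card := by
  have hAnn : finrank ℝ P.dualAnnihilator = 2 := finrank_dualAnnihilator P hP hk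
  have hA : finrank ℝ (diffAnnihilator P) ≤ 2 := hAnn ▸ finrank_diffAnnihilator_le P
  rcases Nat.lt_or_ge (finrank ℝ (diffAnnihilator P)) 2 with hA1 | hA2
  · exact two_pow_le_card_restrictedPsi_of_finrank_le_one P (by omega) (by omega)
  · have h1 : 1 ∈ P := one_mem_of_finrank_dualAnnihilator_le P (hAnn ▸ hA2)
    exact two_pow_le_card_restrictedPsi_of_finrank_eq_two P hk h1 (by omega)
end

section
/- Under the hypotheses of the average-of-singular-series proposition, if additionally P_{h∈H}(q | Δ(h)) ≤ C^{ω(q)}/q for all squarefree q ≤ Q, then E_{h∈H} g(h) = 1 + O(w^{−1} (log(2+w))^{O(1)}) + O_ε(Q^{−1} max_{h∈H} |Δ(h)|^ε). -/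
/-!
Each Euler product `g(h)` is at most `exp(2A/w) ∏ (1 + A/q)`, the product over the primes `q > w`
dividing `Δ(h)`: the other primes `p > w` contribute `1 + O(1/p²)`. Expanding the finite product
over the squarefree `d ∣ Δ(h)` built from these primes, the terms with `d > Q` total at most
`(1 + A)^ω(Δ(h)) / Q ≪_ε |Δ(h)|^ε / Q`. Averaging the terms with `d ≤ Q` over `H` and using
`P(d ∣ Δ(h)) ≤ C₀^ω(d) / d` leaves `∑_d (AC₀)^ω(d) / d² ≤ ∏_{p > w} (1 + AC₀/p²) ≤ exp(2AC₀/w)`.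
As `g ≥ 1`, the mean of `g` lies between `1` and `exp(O(1/w)) + O_ε(max |Δ(h)|^ε / Q)`.
-/

/-- Δ(h) = ∏_{i<j, h_i ≠ h_j} (h_i − h_j). -/
def Deltah {t : ℕ} (h : Fin t → ℤ) : ℤ :=
  ∏ p ∈ Finset.univ.filter (fun p : Fin t × Fin t => p.1 < p.2 ∧ h p.1 ≠ h p.2),
    (h p.1 - h p.2)

open Finset Real

lemma Deltah_ne_zero {t : ℕ} (h : Fin t → ℤ) : Deltah h ≠ 0 :=
  prod_ne_zero_iff.mpr fun _ hp => sub_ne_zero.mpr (mem_filter.mp hp).2.2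

lemma Multiset.sum_map_ite_eq_card_filter_mul {ι R : Type*} [NonAssocSemiring R] (H : Multiset ι)
    (P : ι → Prop) [DecidablePred P] (c : R) :
    (H.map fun h => if P h then c else 0).sum = card (H.filter P) * c := by
  induction H using Multiset.induction_on with
  | empty => simp
  | cons a s ih => by_cases hP : P a <;> simp [hP, ih, add_mul, add_comm]

lemma Nat.squarefree_prod_of_prime {s : Finset ℕ} (hs : ∀ p ∈ s, p.Prime) :
    Squarefree (∏ p ∈ s, p) :=
  squarefree_prod_of_pairwise_isCoprime
    (fun p hp q hq hpq =>
      Nat.coprime_iff_isRelPrime.mp ((coprime_primes (hs p hp) (hs q hq)).mpr hpq))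
    fun p hp => (hs p hp).squarefree

lemma one_le_tprod_of_one_le {ι : Type*} {f : ι → ℝ} (hf : Multipliable f) (h : ∀ i, 1 ≤ f i) :
    1 ≤ ∏' i, f i :=
  le_hasProd_of_le_prod hf.hasProd fun _ => one_le_prod fun i _ => h i

lemma sum_inv_sq_le_two_div {w : ℝ} (hw : 0 < w) {s : Finset ℕ} (hs : ∀ p ∈ s, w < p) :
    ∑ p ∈ s, ((p : ℝ) ^ 2)⁻¹ ≤ 2 / w := by
  have hsub : s ⊆ Ioo ⌊w⌋₊ (s.sup id + 1) := fun p hp =>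
    mem_Ioo.mpr ⟨(Nat.floor_lt hw.le).mpr (hs p hp), Nat.lt_succ_of_le (le_sup (f := id) hp)⟩
  calc ∑ p ∈ s, ((p : ℝ) ^ 2)⁻¹ ≤ ∑ p ∈ Ioo ⌊w⌋₊ (s.sup id + 1), ((p : ℝ) ^ 2)⁻¹ :=
        sum_le_sum_of_subset_of_nonneg hsub fun _ _ _ => by positivity
    _ ≤ 2 / (⌊w⌋₊ + 1) := sum_Ioo_inv_sq_le _ _
    _ ≤ 2 / w := div_le_div_of_nonneg_left zero_le_two hw (Nat.lt_floor_add_one w).le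

lemma prod_one_add_div_sq_le_exp {w c : ℝ} (hw : 0 < w) (hc : 0 ≤ c) {s : Finset ℕ}
    (hs : ∀ p ∈ s, w < p) : ∏ p ∈ s, (1 + c / (p : ℝ) ^ 2) ≤ exp (2 * c / w) :=
  calc ∏ p ∈ s, (1 + c / (p : ℝ) ^ 2) ≤ exp (∑ p ∈ s, c / (p : ℝ) ^ 2) :=
        prod_one_add_le_exp_sum s fun _ => by positivity
    _ ≤ exp (2 * c / w) := by
        simp only [div_eq_mul_inv c, ← mul_sum, exp_le_exp]
        rw [mul_comm 2 c, mul_div_assoc]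
        exact mul_le_mul_of_nonneg_left (sum_inv_sq_le_two_div hw hs) hc

lemma exp_sub_one_le_mul_exp (x : ℝ) : exp x - 1 ≤ x * exp x := by
  have h := add_one_le_exp (-x)
  rw [exp_neg] at h
  nlinarith [mul_inv_cancel₀ (exp_pos x).ne', exp_pos x]

lemma exp_div_sub_one_le {c w : ℝ} (hc : 0 ≤ c) (hw : 1 ≤ w) : exp (c / w) - 1 ≤ c * exp c / w := by
  have hw0 : 0 < w := one_pos.trans_le hw
  have hcw : c / w ≤ c := div_le_self hc hw
  calc exp (c / w) - 1 ≤ c / w * exp (c / w) := exp_sub_one_le_mul_exp _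
    _ ≤ c / w * exp c := by gcongr
    _ = c * exp c / w := by ring

lemma pow_card_primeFactors_le {a ε : ℝ} (ha : 1 ≤ a) (hε : 0 < ε) {n : ℕ} (hn : n ≠ 0) :
    a ^ n.primeFactors.card ≤ a ^ ⌊a ^ (1 / ε)⌋₊ * (n : ℝ) ^ ε := by
  set m := ⌊a ^ (1 / ε)⌋₊
  have hsmall : (n.primeFactors.filter (· ≤ m)).card ≤ m := by
    refine (card_le_card fun p hp => ?_).trans (Nat.card_Icc 1 m).le
    obtain ⟨hp, hpm⟩ := mem_filter.mp hp
    exact mem_Icc.mpr ⟨(Nat.prime_of_mem_primeFactors hp).one_lt.le, hpm⟩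
  have hbig : ∀ p ∈ n.primeFactors.filter (¬ · ≤ m), a ≤ (p : ℝ) ^ ε := by
    intro p hp
    have hmp : a ^ (1 / ε) ≤ p := (Nat.lt_floor_add_one _).le.trans
      (by exact_mod_cast Nat.succ_le_of_lt (not_le.mp (mem_filter.mp hp).2))
    calc a = (a ^ (1 / ε)) ^ ε := by
          rw [← rpow_mul (by linarith), one_div_mul_cancel hε.ne', rpow_one]
      _ ≤ (p : ℝ) ^ ε := rpow_le_rpow (by positivity) hmp hε.le
  have hprod : ∏ p ∈ n.primeFactors.filter (¬ · ≤ m), (p : ℝ) ≤ n := by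
    have := Nat.le_of_dvd (Nat.pos_of_ne_zero hn)
      ((prod_dvd_prod_of_subset _ _ (fun p => p) (filter_subset (¬ · ≤ m) _)).trans
        (Nat.prod_primeFactors_dvd n))
    rw [← Nat.cast_prod]
    exact_mod_cast this
  rw [← card_filter_add_card_filter_not (· ≤ m), pow_add]
  refine mul_le_mul (pow_le_pow_right₀ ha hsmall) ?_ (by positivity) (by positivity)
  calc a ^ (n.primeFactors.filter (¬ · ≤ m)).card
        = ∏ p ∈ n.primeFactors.filter (¬ · ≤ m), a := (prod_const a).symm
    _ ≤ ∏ p ∈ n.primeFactors.filter (¬ · ≤ m), (p : ℝ) ^ ε :=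
        prod_le_prod (fun _ _ => by positivity) hbig
    _ = (∏ p ∈ n.primeFactors.filter (¬ · ≤ m), (p : ℝ)) ^ ε :=
        (finsetProd_rpow _ _ (fun _ _ => by positivity) ε)
    _ ≤ (n : ℝ) ^ ε := rpow_le_rpow (by positivity) hprod hε.le

noncomputable def largePrimeFactors (w : ℝ) (n : ℕ) : Finset ℕ :=
  n.primeFactors.filter fun p => w < p

section EulerProduct

variable {w A : ℝ} {n : ℕ} {f : ℕ → ℝ}

lemma prod_le_prod_largePrimeFactors_mul_exp (hw : 0 < w) (hA : 0 ≤ A) (hn : n ≠ 0)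
    (h1 : ∀ p : ℕ, p.Prime → 1 ≤ f p)
    (h2 : ∀ p : ℕ, p.Prime → f p ≤ 1 + A / p)
    (h3 : ∀ p : ℕ, p.Prime → ¬ p ∣ n → f p ≤ 1 + A / (p : ℝ) ^ 2)
    (h4 : ∀ p : ℕ, p.Prime → (p : ℝ) ≤ w → f p = 1)
    {s : Finset ℕ} (hs : ∀ p ∈ s, p.Prime) :
    ∏ p ∈ s, f p ≤ (∏ q ∈ largePrimeFactors w n, (1 + A / q)) * exp (2 * A / w) := by
  set L := largePrimeFactors w n
  have hf0 : ∀ p ∈ s, 0 ≤ f p := fun p hp => zero_le_one.trans (h1 p (hs p hp))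
  have hL : ∏ p ∈ s.filter (· ∈ L), f p ≤ ∏ q ∈ L, (1 + A / q) :=
    calc ∏ p ∈ s.filter (· ∈ L), f p ≤ ∏ q ∈ s.filter (· ∈ L), (1 + A / q) :=
          prod_le_prod (fun p hp => hf0 p (mem_filter.mp hp).1)
            fun p hp => h2 p (hs p (mem_filter.mp hp).1)
      _ ≤ ∏ q ∈ L, (1 + A / q) :=
          prod_le_prod_of_subset_of_one_le (fun p hp => (mem_filter.mp hp).2)
            (fun _ _ => by positivity) fun _ _ _ => le_add_of_nonneg_right (by positivity)
  have hnotL : ∏ p ∈ s.filter (· ∉ L), f p ≤ exp (2 * A / w) := by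
    set s' := (s.filter (· ∉ L)).filter fun p : ℕ => w < p
    have hs' : ∀ p ∈ s', p.Prime ∧ w < p ∧ ¬ p ∣ n := by
      intro p hp
      obtain ⟨⟨hps, hpL⟩, hpw⟩ := by simpa only [s', mem_filter] using hp
      exact ⟨hs p hps, hpw, fun hpn =>
        hpL (mem_filter.mpr ⟨Nat.mem_primeFactors.mpr ⟨hs p hps, hpn, hn⟩, hpw⟩)⟩
    calc ∏ p ∈ s.filter (· ∉ L), f p = ∏ p ∈ s', f p := by
          refine (prod_filter_of_ne fun p hp hfp => ?_).symm
          by_contra hpw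
          exact hfp (h4 p (hs p (mem_filter.mp hp).1) (not_lt.mp hpw))
      _ ≤ ∏ p ∈ s', (1 + A / (p : ℝ) ^ 2) :=
          prod_le_prod (fun p hp => zero_le_one.trans (h1 p (hs' p hp).1))
            fun p hp => h3 p (hs' p hp).1 (hs' p hp).2.2
      _ ≤ exp (2 * A / w) := prod_one_add_div_sq_le_exp hw hA fun p hp => (hs' p hp).2.1
  rw [← prod_filter_mul_prod_filter_not s (· ∈ L)]
  exact mul_le_mul hL hnotL (prod_nonneg fun p hp => hf0 p (mem_filter.mp hp).1)
    (prod_nonneg fun _ _ => by positivity)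

lemma tprod_le_prod_largePrimeFactors_mul_exp (hw : 0 < w) (hA : 0 ≤ A) (hn : n ≠ 0)
    (h1 : ∀ p : ℕ, p.Prime → 1 ≤ f p)
    (h2 : ∀ p : ℕ, p.Prime → f p ≤ 1 + A / p)
    (h3 : ∀ p : ℕ, p.Prime → ¬ p ∣ n → f p ≤ 1 + A / (p : ℝ) ^ 2)
    (h4 : ∀ p : ℕ, p.Prime → (p : ℝ) ≤ w → f p = 1)
    (hf : Multipliable fun p : Nat.Primes => f p) :
    ∏' p : Nat.Primes, f p ≤ (∏ q ∈ largePrimeFactors w n, (1 + A / q)) * exp (2 * A / w) :=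
  hasProd_le_of_prod_le hf.hasProd fun s => by
    let ι : Nat.Primes ↪ ℕ := ⟨(↑), Nat.Primes.coe_nat_injective⟩
    refine (prod_map s ι f).symm.trans_le
      (prod_le_prod_largePrimeFactors_mul_exp hw hA hn h1 h2 h3 h4 fun p hp => ?_)
    obtain ⟨q, -, rfl⟩ := mem_map.mp hp
    exact q.2

end EulerProduct

/-- `d = 1` is included: it accounts for the constant term of the expanded Euler product. -/
noncomputable def roughSquarefree (w : ℝ) (Q : ℕ) : Finset ℕ :=
  (Icc 1 Q).filter fun d => Squarefree d ∧ ∀ p ∈ d.primeFactors, w < p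

section Expansion

variable {w a : ℝ} {Q n : ℕ}

lemma prod_div_natCast_eq (a : ℝ) (s : Finset ℕ) :
    ∏ q ∈ s, a / (q : ℝ) = a ^ s.card / (∏ q ∈ s, q : ℕ) := by
  rw [prod_div_distrib, prod_const, Nat.cast_prod]

lemma prod_mem_roughSquarefree {T : Finset ℕ} (hT : T ⊆ largePrimeFactors w n)
    (hTQ : ∏ p ∈ T, p ≤ Q) : ∏ p ∈ T, p ∈ (roughSquarefree w Q).filter (· ∣ n) := by
  have hTn : T ⊆ n.primeFactors := hT.trans (filter_subset _ _)
  have hprime : ∀ p ∈ T, p.Prime := fun p hp => Nat.prime_of_mem_primeFactors (hTn hp)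
  simp only [roughSquarefree, mem_filter, mem_Icc]
  refine ⟨⟨⟨prod_pos fun p hp => (hprime p hp).pos, hTQ⟩, Nat.squarefree_prod_of_prime hprime,
    fun p hp => ?_⟩, ?_⟩
  · rw [Nat.primeFactors_prod hprime] at hp
    exact (mem_filter.mp (hT hp)).2
  · exact (prod_dvd_prod_of_subset _ _ (fun p => p) hTn).trans (Nat.prod_primeFactors_dvd n)

lemma prod_largePrimeFactors_one_add_div_le (ha : 0 ≤ a) (hQ : 0 < Q) :
    ∏ q ∈ largePrimeFactors w n, (1 + a / q) ≤
      ∑ d ∈ roughSquarefree w Q, (if d ∣ n then a ^ d.primeFactors.card / d else 0)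
        + (1 + a) ^ n.primeFactors.card / Q := by
  set L := largePrimeFactors w n
  have hprime : ∀ T ∈ L.powerset, ∀ p ∈ T, p.Prime := fun T hT p hp =>
    Nat.prime_of_mem_primeFactors (filter_subset _ _ (mem_powerset.mp hT hp))
  rw [prod_one_add, ← sum_filter_add_sum_filter_not _ (fun T => ∏ p ∈ T, p ≤ Q), ← sum_filter]
  refine add_le_add ?_ ?_
  · calc ∑ T ∈ L.powerset.filter (fun T => ∏ p ∈ T, p ≤ Q), ∏ q ∈ T, a / (q : ℝ)
          = ∑ T ∈ L.powerset.filter (fun T => ∏ p ∈ T, p ≤ Q),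
              a ^ (∏ p ∈ T, p).primeFactors.card / (∏ p ∈ T, p : ℕ) :=
          sum_congr rfl fun T hT => by
            rw [prod_div_natCast_eq, Nat.primeFactors_prod (hprime T (mem_filter.mp hT).1)]
      _ = ∑ d ∈ (L.powerset.filter (fun T => ∏ p ∈ T, p ≤ Q)).image (fun T => ∏ p ∈ T, p),
              a ^ d.primeFactors.card / (d : ℝ) :=
          (sum_image (f := fun d : ℕ => a ^ d.primeFactors.card / (d : ℝ)) fun T hT T' hT' h => by
            rw [← Nat.primeFactors_prod (hprime T (mem_filter.mp hT).1),
              ← Nat.primeFactors_prod (hprime T' (mem_filter.mp hT').1), h]).symm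
      _ ≤ ∑ d ∈ (roughSquarefree w Q).filter (· ∣ n), a ^ d.primeFactors.card / (d : ℝ) :=
          sum_le_sum_of_subset_of_nonneg (fun d hd => by
              obtain ⟨T, hT, rfl⟩ := mem_image.mp hd
              exact prod_mem_roughSquarefree (mem_powerset.mp (mem_filter.mp hT).1)
                (mem_filter.mp hT).2)
            fun _ _ _ => by positivity
  · calc ∑ T ∈ L.powerset.filter (fun T => ¬ ∏ p ∈ T, p ≤ Q), ∏ q ∈ T, a / (q : ℝ)
          ≤ ∑ T ∈ L.powerset.filter (fun T => ¬ ∏ p ∈ T, p ≤ Q), a ^ T.card / (Q : ℝ) :=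
          sum_le_sum fun T hT => by
            rw [prod_div_natCast_eq]
            exact div_le_div_of_nonneg_left (by positivity) (by exact_mod_cast hQ)
              (by exact_mod_cast (not_le.mp (mem_filter.mp hT).2).le)
      _ ≤ ∑ T ∈ L.powerset, a ^ T.card / (Q : ℝ) :=
          sum_le_sum_of_subset_of_nonneg (filter_subset _ _) fun _ _ _ => by positivity
      _ = (1 + a) ^ L.card / Q := by
          rw [← sum_div, ← prod_const, prod_one_add]
          simp only [prod_const]
      _ ≤ (1 + a) ^ n.primeFactors.card / Q := by
          gcongr
          · linarith
          · exact filter_subset _ _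

lemma sum_roughSquarefree_le_exp {b : ℝ} (hw : 0 < w) (hb : 0 ≤ b) (Q : ℕ) :
    ∑ d ∈ roughSquarefree w Q, b ^ d.primeFactors.card / (d : ℝ) ^ 2 ≤ exp (2 * b / w) := by
  set P := (roughSquarefree w Q).biUnion Nat.primeFactors
  have hsf : ∀ d ∈ roughSquarefree w Q, Squarefree d := fun d hd => (mem_filter.mp hd).2.1
  have hinj : Set.InjOn Nat.primeFactors (roughSquarefree w Q : Set ℕ) := fun d hd d' hd' h => by
    rw [← Nat.prod_primeFactors_of_squarefree (hsf d hd),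
      ← Nat.prod_primeFactors_of_squarefree (hsf d' hd'), h]
  calc ∑ d ∈ roughSquarefree w Q, b ^ d.primeFactors.card / (d : ℝ) ^ 2
        = ∑ d ∈ roughSquarefree w Q, ∏ p ∈ d.primeFactors, b / (p : ℝ) ^ 2 :=
        sum_congr rfl fun d hd => by
          rw [prod_div_distrib, prod_const, prod_pow, ← Nat.cast_prod,
            Nat.prod_primeFactors_of_squarefree (hsf d hd)]
    _ = ∑ T ∈ (roughSquarefree w Q).image Nat.primeFactors, ∏ p ∈ T, b / (p : ℝ) ^ 2 :=
        (sum_image (f := fun T : Finset ℕ => ∏ p ∈ T, b / (p : ℝ) ^ 2) hinj).symm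
    _ ≤ ∑ T ∈ P.powerset, ∏ p ∈ T, b / (p : ℝ) ^ 2 :=
        sum_le_sum_of_subset_of_nonneg (fun T hT => by
            obtain ⟨d, hd, rfl⟩ := mem_image.mp hT
            exact mem_powerset.mpr (subset_biUnion_of_mem _ hd))
          fun _ _ _ => prod_nonneg fun _ _ => by positivity
    _ = ∏ p ∈ P, (1 + b / (p : ℝ) ^ 2) := (prod_one_add P).symm
    _ ≤ exp (2 * b / w) := prod_one_add_div_sq_le_exp hw hb fun p hp => by
        obtain ⟨d, hd, hpd⟩ := mem_biUnion.mp hp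
        exact (mem_filter.mp hd).2.2 p hpd

end Expansion

section Average

variable {ι : Type*} {H : Multiset ι} {n : ι → ℕ} {w A C₀ : ℝ} {Q : ℕ}

lemma sum_map_sum_roughSquarefree_le (hw : 0 < w) (hA : 0 ≤ A) (hC₀ : 0 ≤ C₀) (hH : H ≠ 0)
    (hprob : ∀ q : ℕ, Squarefree q → q ≤ Q →
      (Multiset.card (H.filter fun h => q ∣ n h) : ℝ) / Multiset.card H ≤
        C₀ ^ q.primeFactors.card / q) :
    (H.map fun h => ∑ d ∈ roughSquarefree w Q,
        if d ∣ n h then A ^ d.primeFactors.card / (d : ℝ) else 0).sum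
      ≤ Multiset.card H * exp (2 * (A * C₀) / w) := by
  have hcard : (0 : ℝ) < Multiset.card H := by exact_mod_cast Multiset.card_pos.mpr hH
  rw [Multiset.sum_map_sum]
  calc ∑ d ∈ roughSquarefree w Q,
        (H.map fun h => if d ∣ n h then A ^ d.primeFactors.card / (d : ℝ) else 0).sum
      = ∑ d ∈ roughSquarefree w Q, Multiset.card (H.filter fun h => d ∣ n h) *
          (A ^ d.primeFactors.card / (d : ℝ)) :=
        sum_congr rfl fun d _ => Multiset.sum_map_ite_eq_card_filter_mul _ _ _
    _ ≤ ∑ d ∈ roughSquarefree w Q, Multiset.card H * (C₀ ^ d.primeFactors.card / d) *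
          (A ^ d.primeFactors.card / (d : ℝ)) := by
        refine sum_le_sum fun d hd => mul_le_mul_of_nonneg_right ?_ (by positivity)
        obtain ⟨hd, hsf, -⟩ := mem_filter.mp hd
        exact (div_le_iff₀' hcard).mp (hprob d hsf (mem_Icc.mp hd).2)
    _ = Multiset.card H *
          ∑ d ∈ roughSquarefree w Q, (A * C₀) ^ d.primeFactors.card / (d : ℝ) ^ 2 := by
        rw [mul_sum]
        exact sum_congr rfl fun d _ => by ring
    _ ≤ Multiset.card H * exp (2 * (A * C₀) / w) :=
        mul_le_mul_of_nonneg_left (sum_roughSquarefree_le_exp hw (by positivity) Q) hcard.le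

lemma sum_map_div_card_le {g : ι → ℝ} {ε M : ℝ} (hw : 1 ≤ w) (hA : 0 ≤ A) (hC₀ : 0 ≤ C₀)
    (hε : 0 < ε) (hQ : 0 < Q) (hH : H ≠ 0) (hn : ∀ h, n h ≠ 0)
    (hg : ∀ h, g h ≤ (∏ q ∈ largePrimeFactors w (n h), (1 + A / q)) * exp (2 * A / w))
    (hprob : ∀ q : ℕ, Squarefree q → q ≤ Q →
      (Multiset.card (H.filter fun h => q ∣ n h) : ℝ) / Multiset.card H ≤
        C₀ ^ q.primeFactors.card / q)
    (hM : ∀ h ∈ H, (n h : ℝ) ≤ M) :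
    (H.map g).sum / Multiset.card H ≤
      exp (2 * A * (1 + C₀) / w)
        + exp (2 * A) * ((1 + A) ^ ⌊(1 + A) ^ (1 / ε)⌋₊ * M ^ ε / Q) := by
  set E := (1 + A) ^ ⌊(1 + A) ^ (1 / ε)⌋₊ * M ^ ε / Q
  set S := fun h => ∑ d ∈ roughSquarefree w Q,
    if d ∣ n h then A ^ d.primeFactors.card / (d : ℝ) else 0
  have hcard : (0 : ℝ) < Multiset.card H := by exact_mod_cast Multiset.card_pos.mpr hH
  have hw0 : 0 < w := one_pos.trans_le hw
  have hpointwise : ∀ h ∈ H, g h ≤ exp (2 * A / w) * S h + exp (2 * A) * E := by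
    intro h hh
    have hE : (1 + A) ^ (n h).primeFactors.card / (Q : ℝ) ≤ E := by
      refine div_le_div_of_nonneg_right ((pow_card_primeFactors_le (by linarith) hε (hn h)).trans
        (mul_le_mul_of_nonneg_left ?_ (by positivity))) (Nat.cast_nonneg Q)
      exact rpow_le_rpow (Nat.cast_nonneg _) (hM h hh) hε.le
    have hE0 : 0 ≤ E := by
      have : 0 ≤ M := (Nat.cast_nonneg _).trans (hM h hh)
      positivity
    have hexp : exp (2 * A / w) ≤ exp (2 * A) := exp_le_exp.mpr (div_le_self (by positivity) hw)
    calc g h ≤ (∏ q ∈ largePrimeFactors w (n h), (1 + A / q)) * exp (2 * A / w) := hg h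
      _ ≤ (S h + E) * exp (2 * A / w) := mul_le_mul_of_nonneg_right
          ((prod_largePrimeFactors_one_add_div_le hA hQ).trans (add_le_add le_rfl hE))
          (exp_pos _).le
      _ ≤ exp (2 * A / w) * S h + exp (2 * A) * E := by
          have := mul_le_mul_of_nonneg_left hexp hE0
          linarith
  rw [div_le_iff₀' hcard]
  calc (H.map g).sum ≤ (H.map fun h => exp (2 * A / w) * S h + exp (2 * A) * E).sum :=
        Multiset.sum_map_le_sum_map _ _ hpointwise
    _ = exp (2 * A / w) * (H.map S).sum + Multiset.card H * (exp (2 * A) * E) := by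
        rw [Multiset.sum_map_add, Multiset.sum_map_mul_left, Multiset.map_const',
          Multiset.sum_replicate, nsmul_eq_mul]
    _ ≤ exp (2 * A / w) * (Multiset.card H * exp (2 * (A * C₀) / w))
          + Multiset.card H * (exp (2 * A) * E) := by
        gcongr
        exact sum_map_sum_roughSquarefree_le hw0 hA hC₀ hH hprob
    _ = Multiset.card H * (exp (2 * A * (1 + C₀) / w) + exp (2 * A) * E) := by
        rw [show 2 * A * (1 + C₀) / w = 2 * A / w + 2 * (A * C₀) / w by ring, exp_add]
        ring

lemma abs_sum_map_div_card_sub_one_le {g : ι → ℝ} {ε M : ℝ} (hw : 1 ≤ w) (hA : 0 ≤ A)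
    (hC₀ : 0 ≤ C₀) (hε : 0 < ε) (hQ : 0 < Q) (hH : H ≠ 0) (hn : ∀ h, n h ≠ 0)
    (hg₁ : ∀ h, 1 ≤ g h)
    (hg : ∀ h, g h ≤ (∏ q ∈ largePrimeFactors w (n h), (1 + A / q)) * exp (2 * A / w))
    (hprob : ∀ q : ℕ, Squarefree q → q ≤ Q →
      (Multiset.card (H.filter fun h => q ∣ n h) : ℝ) / Multiset.card H ≤
        C₀ ^ q.primeFactors.card / q)
    (hM : ∀ h ∈ H, (n h : ℝ) ≤ M) :
    |(H.map g).sum / Multiset.card H - 1| ≤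
      2 * A * (1 + C₀) * exp (2 * A * (1 + C₀)) / w
        + exp (2 * A) * (1 + A) ^ ⌊(1 + A) ^ (1 / ε)⌋₊ * M ^ ε / Q := by
  have hcard : (0 : ℝ) < Multiset.card H := by exact_mod_cast Multiset.card_pos.mpr hH
  have hlower : 1 ≤ (H.map g).sum / Multiset.card H := by
    rw [le_div_iff₀ hcard]
    simpa using Multiset.sum_map_le_sum_map (fun _ => (1 : ℝ)) g fun h _ => hg₁ h
  have hupper := sum_map_div_card_le hw hA hC₀ hε hQ hH hn hg hprob hM
  have hexp := exp_div_sub_one_le (c := 2 * A * (1 + C₀)) (by positivity) hw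
  rw [abs_of_nonneg (sub_nonneg.mpr hlower), mul_assoc (exp (2 * A)),
    mul_div_assoc (exp (2 * A))]
  linarith

end Average

/-- Under the hypotheses of the average-of-singular-series proposition, if additionally
P_{h∈H}(q ∣ Δ(h)) ≤ C₀^{ω(q)}/q for all squarefree q ≤ Q, then
E_{h∈H} g(h) = 1 + O(w^{-1} (log(2+w))^{O(1)}) + O_ε(Q^{-1} max_{h∈H}|Δ(h)|^ε). -/
theorem stmt10 (t : ℕ) (A C₀ ε : ℝ) (hA : 0 < A) (hC₀ : 0 < C₀) (hε : 0 < ε) :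
    ∃ C B : ℝ, 0 < C ∧ 0 < B ∧ ∀ w : ℝ, 1 ≤ w →
    ∀ (gp : ℕ → (Fin t → ℤ) → ℝ) (g : (Fin t → ℤ) → ℝ),
    (∀ p : ℕ, p.Prime → ∀ h, 1 ≤ gp p h) →
    (∀ p : ℕ, p.Prime → ∀ h, gp p h ≤ 1 + A / p) →
    (∀ p : ℕ, p.Prime → ∀ h, ¬ ((p : ℤ) ∣ Deltah h) → gp p h ≤ 1 + A / (p : ℝ) ^ 2) →
    (∀ p : ℕ, p.Prime → (p : ℝ) ≤ w → ∀ h, gp p h = 1) →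
    (∀ h, Multipliable fun p : Nat.Primes => gp (p : ℕ) h) →
    (∀ h, g h = ∏' p : Nat.Primes, gp (p : ℕ) h) →
    ∀ H : Multiset (Fin t → ℤ), H ≠ 0 →
    ∀ Q : ℕ, 2 ≤ Q →
    (∀ q : ℕ, Squarefree q → q ≤ Q →
      ((Multiset.card (H.filter fun h => (q : ℤ) ∣ Deltah h)) : ℝ) /
        (Multiset.card H : ℝ) ≤ C₀ ^ q.primeFactors.card / (q : ℝ)) →
    ∀ M : ℝ, (∀ h ∈ H, |(Deltah h : ℝ)| ≤ M) →
    |(H.map g).sum / (Multiset.card H : ℝ) - 1| ≤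
      C * (Real.log (2 + w)) ^ B / w + C * M ^ ε / (Q : ℝ) := by
  set c := 2 * A * (1 + C₀)
  set K := exp (2 * A) * (1 + A) ^ ⌊(1 + A) ^ (1 / ε)⌋₊
  refine ⟨c * exp c + K, 1, by positivity, one_pos, ?_⟩
  intro w hw gp g hgp1 hgp2 hgp3 hgp4 hmult hg H hH Q hQ hprob M hM
  have hn (h : Fin t → ℤ) : (Deltah h).natAbs ≠ 0 := Int.natAbs_ne_zero.mpr (Deltah_ne_zero h)
  have hg₁ (h : Fin t → ℤ) : 1 ≤ g h :=
    (hg h).symm ▸ one_le_tprod_of_one_le (hmult h) fun p => hgp1 p p.2 h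
  have hg_le (h : Fin t → ℤ) :
      g h ≤ (∏ q ∈ largePrimeFactors w (Deltah h).natAbs, (1 + A / q)) * exp (2 * A / w) :=
    (hg h).trans_le (tprod_le_prod_largePrimeFactors_mul_exp (one_pos.trans_le hw) hA.le (hn h)
      (fun p hp => hgp1 p hp h) (fun p hp => hgp2 p hp h)
      (fun p hp hpn => hgp3 p hp h (Int.natCast_dvd.not.mpr hpn))
      (fun p hp hpw => hgp4 p hp hpw h) (hmult h))
  have hM0 : 0 ≤ M := by
    obtain ⟨h, hh⟩ := Multiset.exists_mem_of_ne_zero hH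
    exact (abs_nonneg _).trans (hM h hh)
  have hlog : 1 ≤ log (2 + w) := by
    rw [le_log_iff_exp_le (by linarith)]
    linarith [exp_one_lt_d9]
  refine (abs_sum_map_div_card_sub_one_le hw hA.le hC₀.le hε (by omega : 0 < Q) hH hn hg₁ hg_le
    (by simpa only [Int.natCast_dvd] using hprob)
    fun h hh => by simpa [Nat.cast_natAbs] using hM h hh).trans (add_le_add ?_ ?_)
  · rw [rpow_one]
    refine div_le_div_of_nonneg_right ?_ (by linarith)
    exact (le_add_of_nonneg_right (by positivity)).trans
      (le_mul_of_one_le_right (by positivity) hlog)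
  · refine div_le_div_of_nonneg_right ?_ (Nat.cast_nonneg Q)
    exact mul_le_mul_of_nonneg_right (le_add_of_nonneg_left (by positivity)) (rpow_nonneg hM0 ε)
end

section
/- Let ξ(s) = Σ a_i s_i and ξ'(s) = Σ a_i' s_i be linear forms in ℓ variables with all a_i, a_i' nonzero integers such that a_i' divides a_i and a_i/a_i' divides Q for every i, for some positive integer Q. If (f, f̃) is an ε-discrepancy pair with width S with respect to ξ, then (f, f̃) is an ε-discrepancy pair with width QS with respect to ξ'. -/
/-- The box [S]^ℓ ⊆ ℤ^ℓ. -/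
noncomputable def sbox (ℓ S : ℕ) : Finset (Fin ℓ → ℤ) :=
  Fintype.piFinset fun _ => Finset.Icc (1 : ℤ) (S : ℤ)

/-- (f, f̃) is an ε-discrepancy pair with width S with respect to the linear form ξ:
for all u₁,…,u_ℓ : G^{ℓ+1} → [−1,1] with uᵢ not depending on sᵢ,
|E_{n∈G} E_{s∈[S]^ℓ} (f(n+ξ(s)) − f̃(n+ξ(s))) ∏ᵢ uᵢ(n,s)| ≤ ε. -/
def IsDiscrepancyPair (N : ℕ) [NeZero N] (ℓ S : ℕ) (ε : ℝ)
    (ξ : (Fin ℓ → ℤ) → ℤ) (f ftil : ZMod N → ℝ) : Prop :=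
  ∀ u : Fin ℓ → ZMod N → (Fin ℓ → ZMod N) → ℝ,
    (∀ i n s, |u i n s| ≤ 1) →
    (∀ i n s s', (∀ j, j ≠ i → s j = s' j) → u i n s = u i n s') →
    |(∑ n : ZMod N, ∑ s ∈ sbox ℓ S,
        (f (n + ((ξ s : ℤ) : ZMod N)) - ftil (n + ((ξ s : ℤ) : ZMod N))) *
          ∏ i, u i n fun j => ((s j : ℤ) : ZMod N)) / ((N : ℝ) * (S : ℝ) ^ ℓ)| ≤ ε

/-! Write `a i = a' i * q i`. Since `q i ∣ Q`, the interval `[1, QS]` is partitioned into `Q`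
progressions `{q i * s + c | s ∈ [1, S]}`, so `[QS]^ℓ` is a disjoint union of `Q^ℓ` sets
`c + q • [S]^ℓ`. On each of them `ξ' (q • s + c) = ξ s + ξ' c`; shifting `n` by `ξ' c` and replacing
`u i n σ` by `u i (n - ξ' c) (q • σ + c)`, which still ignores `σ i`, turns that piece of the
width-`QS` sum into a width-`S` discrepancy sum for `ξ`, bounded by `ε N S^ℓ`. Adding the `Q^ℓ`
pieces gives `ε N (QS)^ℓ`. -/

open Finset

theorem eq_and_eq_of_add_mul_eq_add_mul {b j j' m m' : ℤ} (hj : j ∈ Ico 0 b) (hj' : j' ∈ Ico 0 b)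
    (h : j + b * m = j' + b * m') : j = j' ∧ m = m' := by
  rw [mem_Ico] at hj hj'
  have hb : 0 < b := by omega
  obtain ⟨hm, hjm⟩ := (Int.ediv_emod_unique hb).2 ⟨h, hj⟩
  obtain ⟨hm', hjm'⟩ := (Int.ediv_emod_unique hb).2 ⟨rfl, hj'⟩
  exact ⟨hjm.symm.trans hjm', hm.symm.trans hm'⟩

theorem exists_mul_eq_abs_mul_add (q S : ℤ) :
    ∃ c₀ : ℤ, ∀ s ∈ Icc 1 S, ∃ u ∈ Ico 0 S, q * s = |q| * u + c₀ := by
  rcases le_or_gt 0 q with hq | hq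
  · exact ⟨q, fun s hs => ⟨s - 1, by simp only [mem_Icc, mem_Ico] at hs ⊢; omega,
      by rw [abs_of_nonneg hq]; ring⟩⟩
  · exact ⟨q * S, fun s hs => ⟨S - s, by simp only [mem_Icc, mem_Ico] at hs ⊢; omega,
      by rw [abs_of_neg hq]; ring⟩⟩

theorem exists_injOn_mapsTo_mul_add_Icc (q S M : ℤ) :
    ∃ ρ : ℤ × ℤ → ℤ,
      Set.InjOn (fun p : ℤ × ℤ × ℤ => q * p.1 + ρ p.2) ↑(Icc 1 S ×ˢ (Ico 0 |q| ×ˢ Ico 0 M)) ∧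
      Set.MapsTo (fun p : ℤ × ℤ × ℤ => q * p.1 + ρ p.2) ↑(Icc 1 S ×ˢ (Ico 0 |q| ×ˢ Ico 0 M))
        ↑(Icc 1 (|q| * M * S)) := by
  obtain ⟨c₀, hc₀⟩ := exists_mul_eq_abs_mul_add q S
  -- With `q * s = |q| * u + c₀`, we get `q * s + ρ (j, k) - 1 = j + |q| * (u + S * k)`: its
  -- mixed-radix digits in bases `|q|, S, M` are `j, u, k`.
  refine ⟨fun p => 1 + p.1 + |q| * (S * p.2) - c₀, ?_, ?_⟩
  · rintro ⟨s, j, k⟩ hp ⟨s', j', k'⟩ hp' h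
    simp only [coe_product, Set.mem_prod, mem_coe] at hp hp' h
    obtain ⟨u, hu, hsu⟩ := hc₀ s hp.1
    obtain ⟨u', hu', hsu'⟩ := hc₀ s' hp'.1
    obtain ⟨rfl, huk⟩ := eq_and_eq_of_add_mul_eq_add_mul hp.2.1 hp'.2.1
      (m := u + S * k) (m' := u' + S * k') (by linarith)
    obtain ⟨rfl, rfl⟩ := eq_and_eq_of_add_mul_eq_add_mul hu hu' huk
    have hq : q ≠ 0 := by rintro rfl; simp at hp
    rw [mul_left_cancel₀ hq (hsu.trans hsu'.symm)]
  · rintro ⟨s, j, k⟩ hp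
    simp only [coe_product, Set.mem_prod, mem_coe, mem_Icc, mem_Ico] at hp ⊢
    obtain ⟨u, hu, hsu⟩ := hc₀ s (mem_Icc.2 hp.1)
    rw [mem_Ico] at hu
    have hm : 0 ≤ u + S * k := by nlinarith
    have hm' : u + S * k + 1 ≤ S * M := by nlinarith
    have h0 := mul_nonneg (abs_nonneg q) hm
    have h1 := mul_le_mul_of_nonneg_left hm' (abs_nonneg q)
    constructor <;> linarith

theorem exists_bijOn_mul_add_Icc {q : ℤ} {Q S : ℕ} (hQ : 0 < Q) (hS : 0 < S) (hqQ : q ∣ Q) :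
    ∃ C : Finset ℤ, #C = Q ∧
      Set.BijOn (fun p : ℤ × ℤ => q * p.1 + p.2) ↑(Icc 1 (S : ℤ) ×ˢ C)
        ↑(Icc 1 ((Q * S : ℕ) : ℤ)) := by
  obtain ⟨M, hM⟩ : |q| ∣ (Q : ℤ) := (abs_dvd _ _).2 hqQ
  have hq : q ≠ 0 := by rintro rfl; rw [zero_dvd_iff, Nat.cast_eq_zero] at hqQ; omega
  obtain ⟨ρ, hinj, hmaps⟩ := exists_injOn_mapsTo_mul_add_Icc q S M
  have hS1 : (1 : ℤ) ∈ Icc 1 (S : ℤ) := mem_Icc.2 ⟨le_rfl, by exact_mod_cast hS⟩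
  have hρ : Set.InjOn ρ ↑(Ico 0 |q| ×ˢ Ico 0 M) := fun b hb b' hb' h =>
    congrArg Prod.snd (hinj (mem_coe.2 (mem_product.2 ⟨hS1, hb⟩))
      (mem_coe.2 (mem_product.2 ⟨hS1, hb'⟩)) (by simp only [h]) :
      ((1 : ℤ), b) = (1, b'))
  have hcard : #((Ico 0 |q| ×ˢ Ico 0 M).image ρ) = Q := by
    rw [card_image_of_injOn hρ, card_product, Int.card_Ico, Int.card_Ico]
    have hM0 : 0 ≤ M := nonneg_of_mul_nonneg_right (hM ▸ Nat.cast_nonneg Q) (abs_pos.2 hq)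
    zify
    rw [sub_zero, sub_zero, Int.toNat_of_nonneg (abs_nonneg q), Int.toNat_of_nonneg hM0, hM]
  have hQS : |q| * M * S = ((Q * S : ℕ) : ℤ) := by push_cast; rw [hM]
  refine ⟨(Ico 0 |q| ×ˢ Ico 0 M).image ρ, hcard, ?_⟩
  have hmaps' : Set.MapsTo (fun p : ℤ × ℤ => q * p.1 + p.2)
      ↑(Icc 1 (S : ℤ) ×ˢ (Ico 0 |q| ×ˢ Ico 0 M).image ρ) ↑(Icc 1 ((Q * S : ℕ) : ℤ)) := by
    rintro ⟨s, c⟩ hsc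
    simp only [coe_product, Set.mem_prod, mem_coe, mem_image] at hsc
    obtain ⟨hs, b, hb, rfl⟩ := hsc
    exact hQS ▸ @hmaps (s, b) (mem_coe.2 (mem_product.2 ⟨hs, hb⟩))
  have hinj' : Set.InjOn (fun p : ℤ × ℤ => q * p.1 + p.2)
      ↑(Icc 1 (S : ℤ) ×ˢ (Ico 0 |q| ×ˢ Ico 0 M).image ρ) := by
    rintro ⟨s, c⟩ hsc ⟨s', c'⟩ hsc' h
    simp only [coe_product, Set.mem_prod, mem_coe, mem_image] at hsc hsc'
    obtain ⟨hs, b, hb, rfl⟩ := hsc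
    obtain ⟨hs', b', hb', rfl⟩ := hsc'
    obtain ⟨rfl, rfl⟩ := Prod.ext_iff.1 (@hinj (s, b) (mem_coe.2 (mem_product.2 ⟨hs, hb⟩))
      (s', b') (mem_coe.2 (mem_product.2 ⟨hs', hb'⟩)) h)
    rfl
  refine ⟨hmaps', hinj', surjOn_of_injOn_of_card_le _ hmaps' hinj' ?_⟩
  simp only [card_product, hcard, Int.card_Icc, add_sub_cancel_right, Int.toNat_natCast, mul_comm,
    le_refl]

theorem Fintype.sum_piFinset_eq_sum_sum_of_bijOn {ι α β γ M : Type*} [Fintype ι] [DecidableEq ι]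
    [AddCommMonoid M] {A : ι → Finset α} {B : ι → Finset β} {D : ι → Finset γ}
    (φ : ι → α × β → γ) (hφ : ∀ i, Set.BijOn (φ i) ↑(A i ×ˢ B i) ↑(D i)) (F : (ι → γ) → M) :
    ∑ t ∈ Fintype.piFinset D, F t =
      ∑ b ∈ Fintype.piFinset B, ∑ a ∈ Fintype.piFinset A, F fun i => φ i (a i, b i) := by
  have hmem : ∀ {a : ι → α} {b : ι → β}, a ∈ Fintype.piFinset A → b ∈ Fintype.piFinset B →
      ∀ i, (a i, b i) ∈ (↑(A i ×ˢ B i) : Set (α × β)) := fun ha hb i =>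
    mem_coe.2 (mem_product.2 ⟨Fintype.mem_piFinset.1 ha i, Fintype.mem_piFinset.1 hb i⟩)
  rw [← sum_product']
  refine (sum_nbij (fun (p : (ι → β) × (ι → α)) i => φ i (p.2 i, p.1 i)) ?_ ?_ ?_
    fun _ _ => rfl).symm
  · rintro ⟨b, a⟩ hp
    rw [mem_product] at hp
    exact Fintype.mem_piFinset.2 fun i => (hφ i).mapsTo (hmem hp.2 hp.1 i)
  · rintro ⟨b, a⟩ hp ⟨b', a'⟩ hp' h
    rw [mem_coe, mem_product] at hp hp'
    have hi := fun i => (hφ i).injOn (hmem hp.2 hp.1 i) (hmem hp'.2 hp'.1 i) (congrFun h i)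
    exact Prod.ext (funext fun i => (Prod.ext_iff.1 (hi i)).2)
      (funext fun i => (Prod.ext_iff.1 (hi i)).1)
  · intro t ht
    rw [mem_coe, Fintype.mem_piFinset] at ht
    choose p hp hpt using fun i => (hφ i).surjOn (ht i)
    refine ⟨(fun i => (p i).2, fun i => (p i).1), ?_, funext hpt⟩
    simp only [coe_product, Set.mem_prod, mem_coe] at hp
    exact mem_coe.2 (mem_product.2 ⟨Fintype.mem_piFinset.2 fun i => (hp i).2,
      Fintype.mem_piFinset.2 fun i => (hp i).1⟩)

section Discrepancy

variable {N ℓ : ℕ} [NeZero N]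

def discrepancyTerm (ξ : (Fin ℓ → ℤ) → ℤ) (f ftil : ZMod N → ℝ)
    (u : Fin ℓ → ZMod N → (Fin ℓ → ZMod N) → ℝ) (s : Fin ℓ → ℤ) : ℝ :=
  ∑ n : ZMod N, (f (n + ((ξ s : ℤ) : ZMod N)) - ftil (n + ((ξ s : ℤ) : ZMod N))) *
    ∏ i, u i n fun j => ((s j : ℤ) : ZMod N)

theorem isDiscrepancyPair_iff {S : ℕ} (hS : 0 < S) {ε : ℝ} {ξ : (Fin ℓ → ℤ) → ℤ}
    {f ftil : ZMod N → ℝ} :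
    IsDiscrepancyPair N ℓ S ε ξ f ftil ↔
      ∀ u : Fin ℓ → ZMod N → (Fin ℓ → ZMod N) → ℝ,
        (∀ i n s, |u i n s| ≤ 1) →
        (∀ i n s s', (∀ j, j ≠ i → s j = s' j) → u i n s = u i n s') →
        |∑ s ∈ sbox ℓ S, discrepancyTerm ξ f ftil u s| ≤ ε * (N * S ^ ℓ) := by
  have hD : (0 : ℝ) < N * S ^ ℓ := by
    have := NeZero.pos N
    positivity
  refine forall_congr' fun u => imp_congr_right fun _ => imp_congr_right fun _ => ?_
  rw [abs_div, abs_of_pos hD, div_le_iff₀ hD, sum_comm]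
  rfl

theorem discrepancyTerm_affine {ξ ξ' : (Fin ℓ → ℤ) → ℤ} (f ftil : ZMod N → ℝ)
    (u : Fin ℓ → ZMod N → (Fin ℓ → ZMod N) → ℝ) (q c s : Fin ℓ → ℤ) {r : ℤ}
    (hξ : ξ' (fun i => q i * s i + c i) = ξ s + r) :
    discrepancyTerm ξ' f ftil u (fun i => q i * s i + c i) =
      discrepancyTerm ξ f ftil (fun i n σ => u i (n - r) fun j => q j * σ j + c j) s := by
  unfold discrepancyTerm
  rw [hξ]
  refine Fintype.sum_equiv (Equiv.addRight (r : ZMod N)) _ _ fun n => ?_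
  simp only [Equiv.coe_addRight, add_sub_cancel_right, Int.cast_add, Int.cast_mul]
  ring_nf

theorem IsDiscrepancyPair.abs_sum_discrepancyTerm_affine_le {S : ℕ} (hS : 0 < S) {ε : ℝ}
    {a a' q : Fin ℓ → ℤ} (haq : ∀ i, a' i * q i = a i) {f ftil : ZMod N → ℝ}
    (h : IsDiscrepancyPair N ℓ S ε (fun s => ∑ i, a i * s i) f ftil) (c : Fin ℓ → ℤ)
    {u : Fin ℓ → ZMod N → (Fin ℓ → ZMod N) → ℝ} (hu : ∀ i n s, |u i n s| ≤ 1)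
    (hui : ∀ i n s s', (∀ j, j ≠ i → s j = s' j) → u i n s = u i n s') :
    |∑ s ∈ sbox ℓ S, discrepancyTerm (fun s => ∑ i, a' i * s i) f ftil u
        (fun i => q i * s i + c i)| ≤ ε * (N * S ^ ℓ) := by
  have hξ : ∀ s : Fin ℓ → ℤ,
      ∑ i, a' i * (q i * s i + c i) = ∑ i, a i * s i + ∑ i, a' i * c i := fun s => by
    simp only [← haq, mul_add, mul_assoc, sum_add_distrib]
  rw [sum_congr rfl fun s _ => discrepancyTerm_affine (ξ := fun s => ∑ i, a i * s i)
    (ξ' := fun s => ∑ i, a' i * s i) f ftil u q c s (hξ s)]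
  exact (isDiscrepancyPair_iff hS).1 h _ (fun i n σ => hu _ _ _)
    fun i n σ σ' hσ => hui _ _ _ _ fun j hj => by rw [hσ j hj]

end Discrepancy

theorem stmt14_general (N : ℕ) [NeZero N] (ℓ S Q : ℕ) (hS : 2 ≤ S) (hQ : 0 < Q)
    (ε : ℝ) (a a' : Fin ℓ → ℤ)
    (hdvd : ∀ i, a' i ∣ a i) (hQdvd : ∀ i, a i / a' i ∣ (Q : ℤ))
    (f ftil : ZMod N → ℝ)
    (h : IsDiscrepancyPair N ℓ S ε (fun s => ∑ i, a i * s i) f ftil) :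
    IsDiscrepancyPair N ℓ (Q * S) ε (fun s => ∑ i, a' i * s i) f ftil := by
  have hS0 : 0 < S := by omega
  have haq : ∀ i, a' i * (a i / a' i) = a i := fun i => Int.mul_ediv_cancel' (hdvd i)
  choose C hCcard hC using fun i => exists_bijOn_mul_add_Icc hQ hS0 (hQdvd i)
  rw [isDiscrepancyPair_iff (Nat.mul_pos hQ hS0)]
  intro u hu hui
  rw [sbox, Fintype.sum_piFinset_eq_sum_sum_of_bijOn _ hC]
  calc |∑ c ∈ Fintype.piFinset C, ∑ s ∈ sbox ℓ S, _|
      ≤ ∑ c ∈ Fintype.piFinset C, ε * (N * S ^ ℓ) :=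
        (abs_sum_le_sum_abs _ _).trans <| sum_le_sum fun c _ =>
          h.abs_sum_discrepancyTerm_affine_le hS0 haq c hu hui
    _ = ε * (N * ((Q * S : ℕ) : ℝ) ^ ℓ) := by
        rw [sum_const, Fintype.card_piFinset, prod_congr rfl fun i _ => hCcard i, prod_const,
          card_univ, Fintype.card_fin, nsmul_eq_mul]
        push_cast
        ring

/-- If aᵢ, aᵢ' are nonzero integers with aᵢ' ∣ aᵢ and (aᵢ/aᵢ') ∣ Q for each i, and
(f, f̃) is an ε-discrepancy pair with width S with respect to ξ(s) = Σ aᵢsᵢ, then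
(f, f̃) is an ε-discrepancy pair with width QS with respect to ξ'(s) = Σ aᵢ'sᵢ. -/
theorem stmt14 (N : ℕ) [NeZero N] (ℓ S Q : ℕ) (hS : 2 ≤ S) (hQ : 0 < Q)
    (ε : ℝ) (hε : 0 < ε) (a a' : Fin ℓ → ℤ)
    (ha : ∀ i, a i ≠ 0) (ha' : ∀ i, a' i ≠ 0)
    (hdvd : ∀ i, a' i ∣ a i) (hQdvd : ∀ i, a i / a' i ∣ (Q : ℤ))
    (f ftil : ZMod N → ℝ)
    (h : IsDiscrepancyPair N ℓ S ε (fun s => ∑ i, a i * s i) f ftil) :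
    IsDiscrepancyPair N ℓ (Q * S) ε (fun s => ∑ i, a' i * s i) f ftil :=
  stmt14_general N ℓ S Q hS hQ ε a a' hdvd hQdvd f ftil h
end

section
/- Let k ≥ 2, G = ℤ/Nℤ with N prime, δ > 0, D ≥ 2, and f̃ : G → [0,1] a function with E f̃ ≥ δ/2. Assuming the quantitative Szemerédi theorem (for any δ' > 0 and h : [D] → [0,1] with E h ≥ δ', one has E_{n,d∈[D]} h(n)h(n+d)⋯h(n+(k−1)d) ≫_{k,δ'} 1, where h is extended by 0 outside [D]), it follows that Λ_D(f̃,…,f̃) ≫_{k,δ} 1, where Λ_D(f_1,…,f_k) = E_{n∈G} E_{d∈[D]} f_1(n)f_2(n+d)⋯f_k(n+(k−1)d). -/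
/-!
Restrict f̃ to the windows m + [D]. By translation invariance the window averages of f̃ average to
E f̃ ≥ δ/2, so at least δ|G|/4 of the shifts m see density ≥ δ/4 in their window. Szemerédi's
theorem applied to each such restriction (extended by 0 outside [D]) gives ≫ D² progressions of
length k inside the window, each of which is also a progression counted by Λ_D. Summing over
those m and using translation invariance once more bounds Λ_D below by a constant.
-/

open Finset

section Averaging

variable {ι G : Type*} [AddCommGroup G] [Fintype G]

theorem sum_sum_add_eq_card_mul (f : G → ℝ) (s : Finset ι) (a : ι → G) :
    ∑ m, ∑ i ∈ s, f (m + a i) = #s * ∑ x, f x := by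
  rw [sum_comm, ← nsmul_eq_mul, ← sum_const]
  exact sum_congr rfl fun i _ => Equiv.sum_comp (Equiv.addRight (a i)) f

theorem sum_le_card_filter_mul_add (s : Finset ι) (g : ι → ℝ) {B t : ℝ} (ht : 0 ≤ t)
    (hB : ∀ i ∈ s, g i ≤ B) : ∑ i ∈ s, g i ≤ #{i ∈ s | t ≤ g i} * B + #s * t := by
  rw [← sum_filter_add_sum_filter_not s (t ≤ g ·)]
  have hlarge : ∑ i ∈ s with t ≤ g i, g i ≤ #{i ∈ s | t ≤ g i} * B := by
    rw [← nsmul_eq_mul]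
    exact sum_le_card_nsmul _ _ _ fun i hi => hB i (mem_filter.1 hi).1
  have hsmall : ∑ i ∈ s with ¬t ≤ g i, g i ≤ #s * t := by
    calc ∑ i ∈ s with ¬t ≤ g i, g i ≤ #{i ∈ s | ¬t ≤ g i} * t := by
          rw [← nsmul_eq_mul]
          exact sum_le_card_nsmul _ _ _ fun i hi => (not_le.1 (mem_filter.1 hi).2).le
      _ ≤ #s * t := by
          gcongr
          exact filter_subset _ _
  linarith

theorem card_mul_sum_sub_card_mul_le_card_filter_mul (f : G → ℝ) (hf : ∀ x, f x ≤ 1)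
    (s : Finset ι) (a : ι → G) {t : ℝ} (ht : 0 ≤ t) :
    #s * ∑ x, f x - Fintype.card G * t ≤ #{m | t ≤ ∑ i ∈ s, f (m + a i)} * #s := by
  have hwindow : ∀ m ∈ (univ : Finset G), ∑ i ∈ s, f (m + a i) ≤ #s := fun m _ => by
    simpa using sum_le_card_nsmul s (fun i => f (m + a i)) 1 fun i _ => hf _
  have hsplit := sum_le_card_filter_mul_add univ _ ht hwindow
  rw [sum_sum_add_eq_card_mul, card_univ] at hsplit
  linarith

end Averaging

theorem prod_indicator_shift_le {R : Type*} [Ring R] (f : R → ℝ) (hf : ∀ x, 0 ≤ f x) (k : ℕ)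
    (s : Set ℤ) (m : R) (n d : ℤ) :
    ∏ j : Fin k, s.indicator (fun x => f (m + x)) (n + (j : ℕ) * d)
      ≤ ∏ j : Fin k, f (m + n + (j : ℕ) * d) := by
  refine prod_le_prod (fun j _ => Set.indicator_nonneg (fun _ _ => hf _) _) fun j _ => ?_
  refine (Set.indicator_le_self' (fun _ _ => hf _) _).trans_eq ?_
  push_cast
  rw [add_assoc]

theorem le_sum_sum_prod_shift_of_szemeredi {R : Type*} [Ring R] (f : R → ℝ)
    (hf : ∀ x, 0 ≤ f x ∧ f x ≤ 1) (k : ℕ) {D : ℕ} {δ' c : ℝ}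
    (hSz : ∀ h : ℤ → ℝ, (∀ n, 0 ≤ h n ∧ h n ≤ 1) → (∀ n ∉ Icc (1 : ℤ) D, h n = 0) →
      δ' ≤ (∑ n ∈ Icc (1 : ℤ) D, h n) / D →
      c ≤ (∑ n ∈ Icc (1 : ℤ) D, ∑ d ∈ Icc (1 : ℤ) D, ∏ j : Fin k, h (n + (j : ℕ) * d)) / D ^ 2)
    (m : R) (hm : δ' * D ≤ ∑ n ∈ Icc (1 : ℤ) D, f (m + n)) :
    c * D ^ 2 ≤ ∑ n ∈ Icc (1 : ℤ) D, ∑ d ∈ Icc (1 : ℤ) D, ∏ j : Fin k, f (m + n + (j : ℕ) * d) := by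
  rcases Nat.eq_zero_or_pos D with rfl | hD
  · simp
  have hD0 : (0 : ℝ) < D := by exact_mod_cast hD
  set h := ((Icc (1 : ℤ) D : Finset ℤ) : Set ℤ).indicator fun x => f (m + x)
  have hSzh := hSz h
    (fun n => ⟨Set.indicator_nonneg (fun _ _ => (hf _).1) n,
      Set.indicator_apply_le' (fun _ => (hf _).2) fun _ => zero_le_one⟩)
    (fun n hn => Set.indicator_of_notMem (mem_coe.not.2 hn) _)
    (by rwa [le_div_iff₀ hD0, sum_indicator_subset _ subset_rfl])
  rw [le_div_iff₀ (by positivity)] at hSzh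
  refine hSzh.trans (sum_le_sum fun n _ => sum_le_sum fun d _ => ?_)
  exact prod_indicator_shift_le f (fun x => (hf x).1) k _ m n d

theorem stmt17_general (k : ℕ) (δ : ℝ) (hδ : 0 < δ)
    (hSz : ∀ δ' : ℝ, 0 < δ' → ∃ c : ℝ, 0 < c ∧ ∀ D : ℕ, 1 ≤ D →
      ∀ h : ℤ → ℝ, (∀ n, 0 ≤ h n ∧ h n ≤ 1) →
      (∀ n : ℤ, n ∉ Finset.Icc (1 : ℤ) (D : ℤ) → h n = 0) →
      δ' ≤ (∑ n ∈ Finset.Icc (1 : ℤ) (D : ℤ), h n) / (D : ℝ) →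
      c ≤ (∑ n ∈ Finset.Icc (1 : ℤ) (D : ℤ), ∑ d ∈ Finset.Icc (1 : ℤ) (D : ℤ),
            ∏ j : Fin k, h (n + ((j : ℕ) : ℤ) * d)) / ((D : ℝ) ^ 2)) :
    ∃ c : ℝ, 0 < c ∧ ∀ (N : ℕ) [NeZero N], N.Prime → ∀ D : ℕ, 2 ≤ D →
      ∀ ftil : ZMod N → ℝ, (∀ n, 0 ≤ ftil n ∧ ftil n ≤ 1) →
      δ / 2 ≤ (∑ n : ZMod N, ftil n) / (N : ℝ) →
      c ≤ (∑ n : ZMod N, ∑ d ∈ Finset.Icc (1 : ℤ) (D : ℤ),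
            ∏ j : Fin k, ftil (n + ((j : ℕ) : ZMod N) * ((d : ℤ) : ZMod N)))
          / ((N : ℝ) * (D : ℝ)) := by
  obtain ⟨c, hc, hSzc⟩ := hSz (δ / 4) (by positivity)
  refine ⟨c * (δ / 4), by positivity, fun N _ _ D hD f hf hmean => ?_⟩
  have hN : (0 : ℝ) < N := by exact_mod_cast Nat.pos_of_neZero N
  have hD0 : (0 : ℝ) < D := by exact_mod_cast (by omega : 0 < D)
  set I := Icc (1 : ℤ) D
  have hI : (#I : ℝ) = D := by simp [I]
  set count : ZMod N → ℝ := fun x => ∑ d ∈ I, ∏ j : Fin k, f (x + (j : ℕ) * d)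
  set M : Finset (ZMod N) := {m | δ / 4 * D ≤ ∑ n ∈ I, f (m + n)}
  have hM : δ / 4 * N ≤ #M := by
    have hsum : δ / 2 * N ≤ ∑ x, f x := (le_div_iff₀ hN).1 hmean
    have hshifts := card_mul_sum_sub_card_mul_le_card_filter_mul f (fun x => (hf x).2) I (↑)
      (t := δ / 4 * D) (by positivity)
    rw [hI, ZMod.card] at hshifts
    nlinarith
  have hcount : ∀ m ∈ M, c * D ^ 2 ≤ ∑ n ∈ I, count (m + n) := fun m hm =>
    le_sum_sum_prod_shift_of_szemeredi f hf k (hSzc D (by omega)) m (mem_filter.1 hm).2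
  have hcount_sum : #M * (c * D ^ 2) ≤ D * ∑ x, count x := by
    calc #M * (c * D ^ 2) ≤ ∑ m ∈ M, ∑ n ∈ I, count (m + n) := by
          rw [← nsmul_eq_mul]
          exact card_nsmul_le_sum M _ _ hcount
      _ ≤ ∑ m, ∑ n ∈ I, count (m + n) :=
          sum_le_sum_of_subset_of_nonneg (subset_univ M) fun m _ _ =>
            sum_nonneg fun n _ => sum_nonneg fun d _ => prod_nonneg fun j _ => (hf _).1
      _ = D * ∑ x, count x := by rw [sum_sum_add_eq_card_mul, hI]
  rw [le_div_iff₀ (by positivity)]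
  refine le_of_mul_le_mul_left ?_ hD0
  calc D * (c * (δ / 4) * (N * D)) = δ / 4 * N * (c * D ^ 2) := by ring
    _ ≤ #M * (c * D ^ 2) := by gcongr
    _ ≤ D * ∑ x, count x := hcount_sum

/-- Assuming the quantitative Szemerédi theorem, any f̃ : G → [0,1] with E f̃ ≥ δ/2
satisfies Λ_D(f̃,…,f̃) ≫_{k,δ} 1, where
Λ_D(f₁,…,f_k) = E_{n∈G} E_{d∈[D]} f₁(n)f₂(n+d)⋯f_k(n+(k−1)d). -/
theorem stmt17 (k : ℕ) (hk : 2 ≤ k) (δ : ℝ) (hδ : 0 < δ)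
    (hSz : ∀ δ' : ℝ, 0 < δ' → ∃ c : ℝ, 0 < c ∧ ∀ D : ℕ, 1 ≤ D →
      ∀ h : ℤ → ℝ, (∀ n, 0 ≤ h n ∧ h n ≤ 1) →
      (∀ n : ℤ, n ∉ Finset.Icc (1 : ℤ) (D : ℤ) → h n = 0) →
      δ' ≤ (∑ n ∈ Finset.Icc (1 : ℤ) (D : ℤ), h n) / (D : ℝ) →
      c ≤ (∑ n ∈ Finset.Icc (1 : ℤ) (D : ℤ), ∑ d ∈ Finset.Icc (1 : ℤ) (D : ℤ),
            ∏ j : Fin k, h (n + ((j : ℕ) : ℤ) * d)) / ((D : ℝ) ^ 2)) :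
    ∃ c : ℝ, 0 < c ∧ ∀ (N : ℕ) [NeZero N], N.Prime → ∀ D : ℕ, 2 ≤ D →
      ∀ ftil : ZMod N → ℝ, (∀ n, 0 ≤ ftil n ∧ ftil n ≤ 1) →
      δ / 2 ≤ (∑ n : ZMod N, ftil n) / (N : ℝ) →
      c ≤ (∑ n : ZMod N, ∑ d ∈ Finset.Icc (1 : ℤ) (D : ℤ),
            ∏ j : Fin k, ftil (n + ((j : ℕ) : ZMod N) * ((d : ℤ) : ZMod N)))
          / ((N : ℝ) * (D : ℝ)) :=
  stmt17_general k δ hδ hSz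
end
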